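/- arXiv:2208.04755 — 9 statements merged into one kernel-verified Lean document; each statement's English description precedes it below -/
import Mathlib

section
/- Let X be a set, M > 0, and f : X → [0,1] a finitely supported function with Σ_{x∈X} f(x)² = 1 and Σ_{x∈X} f(x) ≤ M. Suppose ε̂ ∈ (0,1) and c > 0 satisfy Σ_{x∈X} min(f(x), c)² = ε̂². Then c ≥ ε̂²/M and the set {x ∈ X : f(x) ≥ c} has cardinality at most M²/ε̂². -/
theorem stmt_1 {X : Type*} (M : ℝ) (hM : 0 < M) (f : X → ℝ)
    (hf0 : ∀ x, 0 ≤ f x) (hf1 : ∀ x, f x ≤ 1)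
    (hsupp : (Function.support f).Finite)
    (hl2 : ∑' x, f x ^ 2 = 1) (hl1 : ∑' x, f x ≤ M)
    (ε c : ℝ) (hε0 : 0 < ε) (hε1 : ε < 1) (hc : 0 < c)
    (hcut : ∑' x, min (f x) c ^ 2 = ε ^ 2) :
    ε ^ 2 / M ≤ c ∧ {x | c ≤ f x}.Finite ∧
      (Nat.card {x | c ≤ f x} : ℝ) ≤ M ^ 2 / ε ^ 2 := by
  classical
  set s := hsupp.toFinset with hs
  have hz : ∀ x ∉ s, f x = 0 := by
    intro x hx
    by_contra h
    exact hx (hsupp.mem_toFinset.mpr h)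
  have hsum1 : ∑' x, f x = ∑ x ∈ s, f x := tsum_eq_sum (fun x hx => hz x hx)
  have hcut' : ∑ x ∈ s, min (f x) c ^ 2 = ε ^ 2 := by
    rw [← hcut]
    exact (tsum_eq_sum (fun x hx => by rw [hz x hx, min_eq_left hc.le]; ring)).symm
  -- first part
  have key : ε ^ 2 ≤ c * M := by
    have h1 : ∑ x ∈ s, min (f x) c ^ 2 ≤ ∑ x ∈ s, c * f x := by
      apply Finset.sum_le_sum
      intro x _
      have hmn : 0 ≤ min (f x) c := le_min (hf0 x) hc.le
      have : min (f x) c ^ 2 = min (f x) c * min (f x) c := sq (min (f x) c) ▸ by ring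
      rw [this]
      exact mul_le_mul (min_le_right _ _) (min_le_left _ _) hmn hc.le
    have h2 : ∑ x ∈ s, c * f x = c * ∑ x ∈ s, f x := by rw [Finset.mul_sum]
    have h3 : c * ∑ x ∈ s, f x ≤ c * M := by
      apply mul_le_mul_of_nonneg_left _ hc.le
      rw [← hsum1]; exact hl1
    calc ε ^ 2 = ∑ x ∈ s, min (f x) c ^ 2 := hcut'.symm
      _ ≤ ∑ x ∈ s, c * f x := h1
      _ = c * ∑ x ∈ s, f x := h2
      _ ≤ c * M := h3
  have part1 : ε ^ 2 / M ≤ c := (div_le_iff₀ hM).mpr key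
  -- second part
  have hA : {x | c ≤ f x} ⊆ Function.support f := by
    intro x hx
    have : 0 < f x := lt_of_lt_of_le hc hx
    exact ne_of_gt this
  have hAfin : {x | c ≤ f x}.Finite := hsupp.subset hA
  refine ⟨part1, hAfin, ?_⟩
  set t := hAfin.toFinset with ht
  have hcard : Nat.card {x | c ≤ f x} = t.card := by
    rw [ht, Nat.card_coe_set_eq, Set.ncard_eq_toFinset_card _ hAfin]
  have hts : t ⊆ s := by
    intro x hx
    rw [hsupp.mem_toFinset]
    exact hA (hAfin.mem_toFinset.mp hx)
  have hcardc : (t.card : ℝ) * c ≤ M := by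
    have h1 : (t.card : ℝ) * c ≤ ∑ x ∈ t, f x := by
      have := Finset.card_nsmul_le_sum t f c (fun x hx => hAfin.mem_toFinset.mp hx)
      simpa [nsmul_eq_mul] using this
    have h2 : ∑ x ∈ t, f x ≤ ∑ x ∈ s, f x :=
      Finset.sum_le_sum_of_subset_of_nonneg hts (fun x _ _ => hf0 x)
    linarith [hsum1 ▸ hl1]
  rw [hcard]
  rw [le_div_iff₀ (by positivity : (0:ℝ) < ε ^ 2)]
  nlinarith [Nat.cast_nonneg (α := ℝ) t.card, hc.le]
end

section
/- Let G be a group, S ⊆ G a finite subset, ε ∈ (0,1] and M ≥ 1. Suppose f : G → [0,∞) is a finitely supported function with Σ_{γ∈G} f(γ)² = 1, Σ_{γ∈G} f(γ) ≤ M, and Σ_{γ∈G} (f(γ) − f(γs))² ≤ ε² for every s ∈ S. Then there exists a function g : G → [0,∞) with Σ_{γ∈G} g(γ)² = 1, Σ_{γ∈G} (g(γ) − g(γs))² ≤ (2ε)² for every s ∈ S, and the support of g has cardinality at most 4M²(1+ε)²/ε². -/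
/-!
Truncate `f` at height `δ`, i.e. pass to `(f - δ)₊`. The map `t ↦ max (t - δ) 0` is
1-Lipschitz, so truncation does not increase `‖f - γ·f‖₂`; it lowers `‖f‖₂²` by at most
`2δ‖f‖₁ ≤ 2δM`; and by Markov's inequality its support has at most `‖f‖₁ / δ ≤ M / δ` points.
For `δ = ε² / (4M(1+ε)²)` the truncation keeps `‖(f - δ)₊‖₂² ≥ 1/2`, so after normalising
the invariance defect grows by a factor of at most `2 ≤ 4`, while `M / δ` is the claimed bound.
-/

open Function

section Truncation

variable {α : Type*}

lemma sq_sub_two_mul_le_sq_max_sub {a : ℝ} (ha : 0 ≤ a) (δ : ℝ) :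
    a ^ 2 - 2 * δ * a ≤ max (a - δ) 0 ^ 2 := by
  rcases le_total a δ with h | h
  · rw [max_eq_right (sub_nonpos.mpr h)]
    nlinarith
  · rw [max_eq_left (sub_nonneg.mpr h)]
    nlinarith [sq_nonneg δ]

lemma lipschitzWith_max_sub_zero (δ : ℝ) : LipschitzWith 1 fun t : ℝ => max (t - δ) 0 :=
  LipschitzWith.of_dist_le_mul fun a b => by
    simpa [Real.dist_eq] using abs_max_sub_max_le_abs (a - δ) (b - δ) 0

lemma Function.HasFiniteSupport.summable_sq_sub_comp {f : α → ℝ} (hf : HasFiniteSupport f)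
    {σ : α → α} (hσ : Injective σ) : Summable fun x => (f x - f (σ x)) ^ 2 :=
  summable_of_hasFiniteSupport <|
    (hf.sub (hf.comp_of_injective hσ)).fun_comp (g := fun t : ℝ => t ^ 2) (by norm_num)

lemma tsum_sq_comp_sub_le {φ : ℝ → ℝ} (hφ : LipschitzWith 1 φ) {f : α → ℝ} (σ : α → α)
    (hf : Summable fun x => (f x - f (σ x)) ^ 2) :
    ∑' x, (φ (f x) - φ (f (σ x))) ^ 2 ≤ ∑' x, (f x - f (σ x)) ^ 2 := by
  have hle : ∀ x, (φ (f x) - φ (f (σ x))) ^ 2 ≤ (f x - f (σ x)) ^ 2 := fun x =>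
    sq_le_sq.mpr (by simpa [Real.dist_eq] using hφ.dist_le_mul (f x) (f (σ x)))
  exact (hf.of_nonneg_of_le (fun x => sq_nonneg _) hle).tsum_le_tsum hle hf

lemma tsum_sq_sub_two_mul_le {f : α → ℝ} (hf0 : ∀ x, 0 ≤ f x) (hf : Summable f)
    (hf2 : Summable fun x => f x ^ 2) {δ : ℝ} (hδ : 0 ≤ δ) :
    ∑' x, f x ^ 2 - 2 * δ * ∑' x, f x ≤ ∑' x, max (f x - δ) 0 ^ 2 := by
  have htrunc : Summable fun x => max (f x - δ) 0 ^ 2 :=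
    hf2.of_nonneg_of_le (fun x => sq_nonneg _) fun x =>
      pow_le_pow_left₀ (le_max_right _ _) (max_le (by linarith) (hf0 x)) 2
  rw [← hf.tsum_mul_left, ← hf2.tsum_sub (hf.mul_left _)]
  exact (hf2.sub (hf.mul_left _)).tsum_le_tsum
    (fun x => sq_sub_two_mul_le_sq_max_sub (hf0 x) δ) htrunc

lemma card_mul_le_tsum {f : α → ℝ} (hf0 : ∀ x, 0 ≤ f x) (hf : Summable f) (δ : ℝ) :
    Nat.card {x | δ < f x} * δ ≤ ∑' x, f x := by
  rcases Set.finite_or_infinite {x | δ < f x} with hfin | hinf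
  · calc Nat.card {x | δ < f x} * δ = ∑ _x ∈ hfin.toFinset, δ := by
          rw [Finset.sum_const, nsmul_eq_mul, Nat.card_eq_card_finite_toFinset hfin]
      _ ≤ ∑ x ∈ hfin.toFinset, f x :=
          Finset.sum_le_sum fun x hx => (hfin.mem_toFinset.mp hx).le
      _ ≤ ∑' x, f x := hf.sum_le_tsum _ fun x _ => hf0 x
  · rw [hinf.card_eq_zero, Nat.cast_zero, zero_mul]
    exact tsum_nonneg hf0

noncomputable def normalizedTruncation (f : α → ℝ) (δ : ℝ) (x : α) : ℝ :=
  max (f x - δ) 0 / √(∑' y, max (f y - δ) 0 ^ 2)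

lemma normalizedTruncation_nonneg (f : α → ℝ) (δ : ℝ) (x : α) : 0 ≤ normalizedTruncation f δ x := by
  unfold normalizedTruncation
  positivity

lemma tsum_sq_normalizedTruncation {f : α → ℝ} {δ : ℝ}
    (h : 0 < ∑' y, max (f y - δ) 0 ^ 2) : ∑' x, normalizedTruncation f δ x ^ 2 = 1 := by
  simp_rw [normalizedTruncation, div_pow, Real.sq_sqrt h.le, tsum_div_const, div_self h.ne']

lemma tsum_sq_normalizedTruncation_sub_le (δ : ℝ) {f : α → ℝ} {σ : α → α}
    (hf : Summable fun x => (f x - f (σ x)) ^ 2) :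
    ∑' x, (normalizedTruncation f δ x - normalizedTruncation f δ (σ x)) ^ 2 ≤
      (∑' x, (f x - f (σ x)) ^ 2) / ∑' y, max (f y - δ) 0 ^ 2 := by
  simp_rw [normalizedTruncation, div_sub_div_same, div_pow, tsum_div_const,
    Real.sq_sqrt (tsum_nonneg fun y => sq_nonneg (max (f y - δ) 0))]
  exact div_le_div_of_nonneg_right (tsum_sq_comp_sub_le (lipschitzWith_max_sub_zero δ) σ hf)
    (tsum_nonneg fun y => sq_nonneg _)

lemma support_normalizedTruncation {f : α → ℝ} {δ : ℝ}
    (h : 0 < ∑' y, max (f y - δ) 0 ^ 2) :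
    support (normalizedTruncation f δ) = {x | δ < f x} := by
  ext x
  simp [normalizedTruncation, (Real.sqrt_pos.mpr h).ne']

end Truncation

theorem stmt_2_general {G : Type*} [Group G] (S : Finset G) (ε M : ℝ)
    (hε0 : 0 < ε) (hM : 1 ≤ M) (f : G → ℝ)
    (hf0 : ∀ γ, 0 ≤ f γ) (hsupp : (Function.support f).Finite)
    (hl2 : ∑' γ, f γ ^ 2 = 1) (hl1 : ∑' γ, f γ ≤ M)
    (hinv : ∀ s ∈ S, ∑' γ, (f γ - f (γ * s)) ^ 2 ≤ ε ^ 2) :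
    ∃ g : G → ℝ, (∀ γ, 0 ≤ g γ) ∧ (∑' γ, g γ ^ 2 = 1) ∧
      (∀ s ∈ S, ∑' γ, (g γ - g (γ * s)) ^ 2 ≤ (2 * ε) ^ 2) ∧
      (Function.support g).Finite ∧
      (Nat.card (Function.support g) : ℝ) ≤ 4 * M ^ 2 * (1 + ε) ^ 2 / ε ^ 2 := by
  set δ := ε ^ 2 / (4 * M * (1 + ε) ^ 2) with hδ
  have hM0 : 0 < M := by linarith
  have hδ0 : 0 < δ := by positivity
  have hfin : HasFiniteSupport f := hsupp
  have hf : Summable f := summable_of_hasFiniteSupport hfin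
  have hA : 1 / 2 ≤ ∑' γ, max (f γ - δ) 0 ^ 2 := by
    have h2δM : 2 * δ * M ≤ 1 / 2 := by
      rw [show 2 * δ * M = ε ^ 2 / (2 * (1 + ε) ^ 2) by rw [hδ]; field_simp; ring,
        div_le_iff₀ (by positivity)]
      nlinarith
    have := tsum_sq_sub_two_mul_le hf0 hf (summable_of_hasFiniteSupport
      (hfin.fun_comp (g := fun t : ℝ => t ^ 2) (by norm_num))) hδ0.le
    linarith [mul_le_mul_of_nonneg_left hl1 hδ0.le]
  have hA0 := one_half_pos.trans_le hA
  have hsupp_g := support_normalizedTruncation hA0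
  refine ⟨normalizedTruncation f δ, normalizedTruncation_nonneg f δ,
    tsum_sq_normalizedTruncation hA0, fun s hs => ?_,
    hsupp_g ▸ hsupp.subset fun γ hγ => (hδ0.trans hγ).ne', ?_⟩
  · calc _ ≤ (∑' γ, (f γ - f (γ * s)) ^ 2) / ∑' γ, max (f γ - δ) 0 ^ 2 :=
          tsum_sq_normalizedTruncation_sub_le δ
            (hfin.summable_sq_sub_comp (mul_left_injective s))
      _ ≤ ε ^ 2 / (1 / 2) := div_le_div₀ (sq_nonneg ε) (hinv s hs) (by norm_num) hA
      _ ≤ (2 * ε) ^ 2 := by nlinarith [sq_nonneg ε]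
  · rw [hsupp_g, show 4 * M ^ 2 * (1 + ε) ^ 2 / ε ^ 2 = M / δ by rw [hδ]; field_simp,
      le_div_iff₀ hδ0]
    exact (card_mul_le_tsum hf0 hf δ).trans hl1

theorem stmt_2 {G : Type*} [Group G] (S : Finset G) (ε M : ℝ)
    (hε0 : 0 < ε) (hε1 : ε ≤ 1) (hM : 1 ≤ M) (f : G → ℝ)
    (hf0 : ∀ γ, 0 ≤ f γ) (hsupp : (Function.support f).Finite)
    (hl2 : ∑' γ, f γ ^ 2 = 1) (hl1 : ∑' γ, f γ ≤ M)
    (hinv : ∀ s ∈ S, ∑' γ, (f γ - f (γ * s)) ^ 2 ≤ ε ^ 2) :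
    ∃ g : G → ℝ, (∀ γ, 0 ≤ g γ) ∧ (∑' γ, g γ ^ 2 = 1) ∧
      (∀ s ∈ S, ∑' γ, (g γ - g (γ * s)) ^ 2 ≤ (2 * ε) ^ 2) ∧
      (Function.support g).Finite ∧
      (Nat.card (Function.support g) : ℝ) ≤ 4 * M ^ 2 * (1 + ε) ^ 2 / ε ^ 2 :=
  stmt_2_general S ε M hε0 hM f hf0 hsupp hl2 hl1 hinv
end

section
/- Let G be a group generated by a finite subset S, equipped with the associated word length metric. Let ε > 0 and N ∈ ℕ. Suppose f : G → [0,∞) satisfies Σ_{γ∈G} f(γ)² = 1, Σ_{γ∈G} (f(γ) − f(γs))² ≤ ε² for every s ∈ S, and the support of f has cardinality at most N. Then there exists a function g : G → [0,∞) with Σ_{γ∈G} g(γ)² = 1, Σ_{γ∈G} (g(γ) − g(γs))² ≤ ε² for every s ∈ S, and the support of g contained in the word-metric ball B(1_G, 4(N+2)N), i.e. every element of the support is a product of at most 4(N+2)N elements of S ∪ S⁻¹. -/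
/-- The word-metric ball `B(1_G, D)` with respect to a generating set `S`:
the set of elements of `G` expressible as a product of at most `D` elements
of `S ∪ S⁻¹`. -/
def wordBall {G : Type*} [Group G] (S : Set G) (D : ℕ) : Set G :=
  {g | ∃ l : List G, l.length ≤ D ∧ (∀ x ∈ l, x ∈ S ∨ x⁻¹ ∈ S) ∧ l.prod = g}

/-!
Measure distances in the Cayley graph of `S`, which is connected since `S` generates `G`. If the
ball of radius `4(N+2)N` is all of `G`, take `g = f`. Otherwise spheres of every radius up to `2N`
are nonempty, and the support of `f` is relocated cluster by cluster: a cluster `C` is a part of the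
support at distance at least `2` from the rest, with all points within `#C - 1` of a base point.
Pieces at distance at least `2` from each other contribute independently to the `ℓ²`-norm and to
every energy `∑ (f γ - f (γ s))²`, and left translations preserve both, so translating each cluster
into its own annulus around `1` keeps all these quantities while landing inside the ball of radius
`2N`.
-/

open Function Finset SimpleGraph

namespace SimpleGraph

variable {V : Type*} {Γ : SimpleGraph V}

theorem Connected.exists_dist_eq (hΓ : Γ.Connected) (u v : V) {m : ℕ} (hm : m ≤ Γ.dist u v) :
    ∃ w, Γ.dist u w = m := by
  obtain ⟨p, hp⟩ := hΓ.exists_walk_length_eq_dist u v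
  refine ⟨p.getVert m, ?_⟩
  rw [← length_eq_dist_of_subwalk hp (p.isSubwalk_take m), Walk.take_length]
  omega

/-- A largest `C ⊆ A` around `a` with `dist a x < #C` on `C` cannot have a neighbour in `A \ C`:
adding it would give a larger such set. -/
theorem Connected.exists_cluster [DecidableEq V] (hΓ : Γ.Connected) {A : Finset V} {a : V}
    (ha : a ∈ A) :
    ∃ C ⊆ A, a ∈ C ∧ (∀ x ∈ C, Γ.dist a x < #C) ∧ ∀ x ∈ C, ∀ y ∈ A \ C, 1 < Γ.dist x y := by
  let P : Finset V → Prop := fun C => a ∈ C ∧ ∀ x ∈ C, Γ.dist a x < #C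
  have hPa : P {a} := ⟨mem_singleton_self a, by simp⟩
  obtain ⟨C, hC, hmax⟩ := (A.powerset.filter P).exists_max_image card
    ⟨{a}, mem_filter.2 ⟨mem_powerset.2 (singleton_subset_iff.2 ha), hPa⟩⟩
  obtain ⟨hCA, haC, hCrad⟩ := And.imp_left mem_powerset.1 (mem_filter.1 hC)
  refine ⟨C, hCA, haC, hCrad, fun x hx y hy => ?_⟩
  obtain ⟨hyA, hyC⟩ := mem_sdiff.1 hy
  refine hΓ.one_lt_dist_of_ne_of_not_adj (fun hxy => hyC (hxy ▸ hx)) fun hxy => ?_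
  have hPy : P (insert y C) := by
    refine ⟨mem_insert_of_mem haC, fun w hw => ?_⟩
    rw [card_insert_of_notMem hyC]
    rcases mem_insert.1 hw with rfl | hw
    · have := hΓ.dist_triangle (u := a) (v := x) (w := w)
      have := hCrad x hx
      rw [dist_eq_one_iff_adj.2 hxy] at *
      omega
    · have := hCrad w hw
      omega
  have := hmax _ (mem_filter.2 ⟨mem_powerset.2 (insert_subset hyA hCA), hPy⟩)
  rw [card_insert_of_notMem hyC] at this
  omega

theorem disjoint_of_one_lt_dist {s t : Set V} (h : ∀ x ∈ s, ∀ y ∈ t, 1 < Γ.dist x y) :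
    Disjoint s t :=
  Set.disjoint_left.2 fun x hs ht => by simpa using h x hs x ht

variable {G : Type*} [Group G] {S : Set G}

@[simps]
def mulCayleyMulLeft (c : G) : mulCayley S →g mulCayley S where
  toFun := (c * ·)
  map_rel' := mulCayley_adj_mul_iff_right.2

theorem mulCayley_connected (hS : Subgroup.closure S = ⊤) : (mulCayley S).Connected := by
  have hreach (g : G) : (mulCayley S).Reachable 1 g := by
    induction (hS ▸ Subgroup.mem_top g : g ∈ Subgroup.closure S) using Subgroup.closure_induction
      with
    | mem s hs =>
      by_cases h : 1 = s
      · exact h ▸ Reachable.rfl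
      · exact Adj.reachable ((mulCayley_adj _ _ _).2 ⟨h, Or.inl (by simpa using hs)⟩)
    | one => exact Reachable.rfl
    | mul x y _ _ hx hy => exact hx.trans (by simpa using hy.map (mulCayleyMulLeft x))
    | inv x _ hx => simpa using (hx.map (mulCayleyMulLeft x⁻¹)).symm
  exact ⟨fun u v => (hreach u).symm.trans (hreach v)⟩

theorem mulCayley_dist_mul_left_le (hS : (mulCayley S).Connected) (c x y : G) :
    (mulCayley S).dist (c * x) (c * y) ≤ (mulCayley S).dist x y := by
  obtain ⟨p, hp⟩ := hS.exists_walk_length_eq_dist x y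
  simpa [hp] using dist_le (p.map (mulCayleyMulLeft c))

theorem mulCayley_dist_mul_left (hS : (mulCayley S).Connected) (c x y : G) :
    (mulCayley S).dist (c * x) (c * y) = (mulCayley S).dist x y :=
  (mulCayley_dist_mul_left_le hS c x y).antisymm <| by
    simpa using mulCayley_dist_mul_left_le hS c⁻¹ (c * x) (c * y)

theorem mulCayley_dist_mul_right_le_one {s : G} (hs : s ∈ S) (γ : G) :
    (mulCayley S).dist γ (γ * s) ≤ 1 := by
  by_cases h : γ = γ * s
  · simp [← h]
  · exact (dist_eq_one_iff_adj.2 ((mulCayley_adj' _ _ _).2 ⟨h, s, hs, Or.inl rfl⟩)).le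

end SimpleGraph

theorem inv_mul_mem_wordBall_of_walk {G : Type*} [Group G] {S : Set G} {x y : G}
    (p : (mulCayley S).Walk x y) : x⁻¹ * y ∈ wordBall S p.length := by
  induction p with
  | nil => exact ⟨[], by simp, by simp, by simp⟩
  | @cons x w y hxw p ih =>
    obtain ⟨l, hl, hmem, hprod⟩ := ih
    refine ⟨x⁻¹ * w :: l, by simpa using hl, ?_, by simp [hprod, mul_assoc]⟩
    rintro u (_ | ⟨_, hu⟩)
    · simpa using ((mulCayley_adj _ _ _).1 hxw).2
    · exact hmem u hu

theorem mem_wordBall_of_dist_le {G : Type*} [Group G] {S : Set G} (hS : (mulCayley S).Connected)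
    {g : G} {D : ℕ} (h : (mulCayley S).dist 1 g ≤ D) : g ∈ wordBall S D := by
  obtain ⟨p, hp⟩ := hS.exists_walk_length_eq_dist 1 g
  obtain ⟨l, hl, hmem, hprod⟩ := inv_mul_mem_wordBall_of_walk p
  exact ⟨l, by omega, hmem, by simpa using hprod⟩

theorem tsum_sq_add_of_mul_eq_zero {α : Type*} {u v : α → ℝ} (hu : Summable fun a => u a ^ 2)
    (hv : Summable fun a => v a ^ 2) (huv : ∀ a, u a * v a = 0) :
    ∑' a, (u a + v a) ^ 2 = ∑' a, u a ^ 2 + ∑' a, v a ^ 2 := by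
  rw [← hu.tsum_add hv]
  congr 1 with a
  linear_combination 2 * huv a

namespace AlmostInvariant

section

variable {α : Type*}

noncomputable def sqNorm (f : α → ℝ) : ℝ := ∑' a, f a ^ 2

theorem summable_sq {f : α → ℝ} (hf : (support f).Finite) : Summable fun a => f a ^ 2 :=
  summable_of_hasFiniteSupport <| hf.subset fun a ha h => ha (by simp [h])

theorem sqNorm_add {φ ψ : α → ℝ} (hφ : (support φ).Finite) (hψ : (support ψ).Finite)
    (h : Disjoint (support φ) (support ψ)) : sqNorm (φ + ψ) = sqNorm φ + sqNorm ψ :=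
  tsum_sq_add_of_mul_eq_zero (summable_sq hφ) (summable_sq hψ) fun a => by
    by_contra ha
    obtain ⟨hφa, hψa⟩ := mul_ne_zero_iff.1 ha
    exact Set.disjoint_left.1 h hφa hψa

end

variable {G : Type*} [Group G] {S : Set G}

noncomputable def energy (f : G → ℝ) (s : G) : ℝ := ∑' γ, (f γ - f (γ * s)) ^ 2

theorem summable_sq_sub_mul_right {f : G → ℝ} (hf : (support f).Finite) (s : G) :
    Summable fun γ => (f γ - f (γ * s)) ^ 2 := by
  refine summable_of_hasFiniteSupport <|
    (hf.union (hf.preimage (mul_left_injective s).injOn)).subset fun γ hγ => ?_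
  by_contra h
  simp_all

theorem sub_mul_sub_eq_zero {φ ψ : G → ℝ}
    (hsep : ∀ x ∈ support φ, ∀ y ∈ support ψ, 1 < (mulCayley S).dist x y) {s : G} (hs : s ∈ S)
    (γ : G) : (φ γ - φ (γ * s)) * (ψ γ - ψ (γ * s)) = 0 := by
  have hmem (χ : G → ℝ) (h : χ γ - χ (γ * s) ≠ 0) : γ ∈ support χ ∨ γ * s ∈ support χ := by
    by_contra! h'
    simp_all
  have hclose := mulCayley_dist_mul_right_le_one hs γ
  have hclose' : (mulCayley S).dist (γ * s) γ ≤ 1 := dist_comm (G := mulCayley S) ▸ hclose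
  by_contra h
  obtain ⟨hφγ, hψγ⟩ := mul_ne_zero_iff.1 h
  rcases hmem φ hφγ with hx | hx <;> rcases hmem ψ hψγ with hy | hy
  all_goals have := hsep _ hx _ hy; first | omega | simp at this

theorem energy_add {φ ψ : G → ℝ} (hφ : (support φ).Finite) (hψ : (support ψ).Finite)
    (hsep : ∀ x ∈ support φ, ∀ y ∈ support ψ, 1 < (mulCayley S).dist x y) {s : G} (hs : s ∈ S) :
    energy (φ + ψ) s = energy φ s + energy ψ s := by
  rw [energy, energy, energy, ← tsum_sq_add_of_mul_eq_zero (summable_sq_sub_mul_right hφ s)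
    (summable_sq_sub_mul_right hψ s) (sub_mul_sub_eq_zero hsep hs)]
  congr 1 with γ
  simp only [Pi.add_apply]
  ring

theorem sqNorm_comp_mul_left (φ : G → ℝ) (c : G) : sqNorm (fun γ => φ (c * γ)) = sqNorm φ :=
  (Equiv.mulLeft c).tsum_eq fun γ => φ γ ^ 2

theorem energy_comp_mul_left (φ : G → ℝ) (c s : G) :
    energy (fun γ => φ (c * γ)) s = energy φ s := by
  simp only [energy, ← mul_assoc]
  exact (Equiv.mulLeft c).tsum_eq fun γ => (φ γ - φ (γ * s)) ^ 2

def SameEnergy (S : Set G) (f g : G → ℝ) : Prop :=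
  sqNorm g = sqNorm f ∧ ∀ s ∈ S, energy g s = energy f s

theorem SameEnergy.refl (f : G → ℝ) : SameEnergy S f f := ⟨rfl, fun _ _ => rfl⟩

theorem sameEnergy_comp_mul_left (f : G → ℝ) (c : G) : SameEnergy S f fun γ => f (c * γ) :=
  ⟨sqNorm_comp_mul_left f c, fun s _ => energy_comp_mul_left f c s⟩

theorem SameEnergy.add {f₁ f₂ g₁ g₂ : G → ℝ} (h₁ : SameEnergy S f₁ g₁) (h₂ : SameEnergy S f₂ g₂)
    (hf₁ : (support f₁).Finite) (hf₂ : (support f₂).Finite)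
    (hg₁ : (support g₁).Finite) (hg₂ : (support g₂).Finite)
    (hf : ∀ x ∈ support f₁, ∀ y ∈ support f₂, 1 < (mulCayley S).dist x y)
    (hg : ∀ x ∈ support g₁, ∀ y ∈ support g₂, 1 < (mulCayley S).dist x y) :
    SameEnergy S (f₁ + f₂) (g₁ + g₂) := by
  refine ⟨?_, fun s hs => ?_⟩
  · rw [sqNorm_add hg₁ hg₂ (disjoint_of_one_lt_dist hg),
      sqNorm_add hf₁ hf₂ (disjoint_of_one_lt_dist hf), h₁.1, h₂.1]
  · rw [energy_add hg₁ hg₂ hg hs, energy_add hf₁ hf₂ hf hs, h₁.2 s hs, h₂.2 s hs]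

/-- Moved around a point `p` at distance `r + #C + 1` from `1`, the cluster `C` stays at distance
at least `2` from the ball of radius `r`. -/
theorem exists_sameEnergy_add_of_cluster (hS : (mulCayley S).Connected) {f₁ f₂ g₂ : G → ℝ}
    {C : Finset G} {a p : G} {r : ℕ} (hf₁ : ∀ γ, 0 ≤ f₁ γ) (hf₁C : support f₁ ⊆ C)
    (hC : ∀ x ∈ C, (mulCayley S).dist a x < #C) (hf₂ : (support f₂).Finite)
    (hsep : ∀ x ∈ support f₁, ∀ y ∈ support f₂, 1 < (mulCayley S).dist x y)
    (hg₂0 : ∀ γ, 0 ≤ g₂ γ) (hg₂ : (support g₂).Finite) (h₂ : SameEnergy S f₂ g₂)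
    (hg₂r : ∀ γ ∈ support g₂, (mulCayley S).dist 1 γ ≤ r)
    (hp : (mulCayley S).dist 1 p = r + #C + 1) :
    ∃ g : G → ℝ, (∀ γ, 0 ≤ g γ) ∧ (support g).Finite ∧ SameEnergy S (f₁ + f₂) g ∧
      ∀ γ ∈ support g, (mulCayley S).dist 1 γ ≤ r + 2 * #C := by
  set ψ : G → ℝ := fun γ => f₁ (a * p⁻¹ * γ)
  have hψdist (γ : G) (hγ : γ ∈ support ψ) :
      r + 2 ≤ (mulCayley S).dist 1 γ ∧ (mulCayley S).dist 1 γ ≤ r + 2 * #C := by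
    have hpγ : (mulCayley S).dist p γ < #C := by
      rw [← mulCayley_dist_mul_left hS (a * p⁻¹), inv_mul_cancel_right]
      exact hC _ (hf₁C hγ)
    have := hS.dist_triangle (u := 1) (v := p) (w := γ)
    have := hS.dist_triangle (u := 1) (v := γ) (w := p)
    rw [dist_comm (u := γ)] at this
    omega
  have hψ : (support ψ).Finite :=
    (C.finite_toSet.preimage (mul_right_injective _).injOn).subset fun γ hγ => hf₁C hγ
  have hsepψ : ∀ x ∈ support ψ, ∀ y ∈ support g₂, 1 < (mulCayley S).dist x y := by
    intro x hx y hy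
    have := hS.dist_triangle (u := 1) (v := y) (w := x)
    have := hψdist x hx
    have := hg₂r y hy
    rw [dist_comm (u := y)] at *
    omega
  refine ⟨ψ + g₂, fun γ => add_nonneg (hf₁ _) (hg₂0 γ), (hψ.union hg₂).subset (support_add _ _),
    (sameEnergy_comp_mul_left f₁ _).add h₂ (C.finite_toSet.subset hf₁C) hf₂ hψ hg₂ hsep hsepψ,
    fun γ hγ => ?_⟩
  rcases support_add _ _ hγ with hγ | hγ
  · exact (hψdist γ hγ).2
  · exact (hg₂r γ hγ).trans (by omega)

theorem exists_sameEnergy_dist_le (hS : (mulCayley S).Connected) {z : G} (A : Finset G)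
    (hz : 2 * #A ≤ (mulCayley S).dist 1 z) (f : G → ℝ) (hf0 : ∀ γ, 0 ≤ f γ)
    (hfA : support f ⊆ A) :
    ∃ g : G → ℝ, (∀ γ, 0 ≤ g γ) ∧ (support g).Finite ∧ SameEnergy S f g ∧
      ∀ γ ∈ support g, (mulCayley S).dist 1 γ ≤ 2 * #A := by
  classical
  induction A using Finset.strongInduction generalizing f with
  | H A ih =>
  obtain rfl | ⟨a, ha⟩ := A.eq_empty_or_nonempty
  · exact ⟨f, hf0, (finite_toSet _).subset hfA, .refl f, fun γ hγ => by simpa using hfA hγ⟩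
  obtain ⟨C, hCA, haC, hCrad, hCsep⟩ := hS.exists_cluster ha
  have hcard : #(A \ C) + #C = #A := card_sdiff_add_card_eq_card hCA
  have hCpos : 0 < #C := card_pos.2 ⟨a, haC⟩
  obtain ⟨p, hp⟩ := hS.exists_dist_eq 1 z (m := 2 * #(A \ C) + #C + 1) (by omega)
  have hf0' (s : Set G) (γ : G) : 0 ≤ s.indicator f γ := Set.indicator_nonneg (fun γ _ => hf0 γ) γ
  have hfR : support ((C : Set G)ᶜ.indicator f) ⊆ ↑(A \ C) := by
    rw [Set.support_indicator, coe_sdiff]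
    exact fun γ ⟨hγC, hγf⟩ => ⟨hfA hγf, hγC⟩
  obtain ⟨gR, hgR0, hgR, hfgR, hgRdist⟩ :=
    ih (A \ C) (sdiff_ssubset hCA ⟨a, haC⟩) (by omega) _ (hf0' _) hfR
  obtain ⟨g, hg0, hg, hfg, hgdist⟩ := exists_sameEnergy_add_of_cluster hS (hf0' C)
    Set.support_indicator_subset hCrad ((A \ C).finite_toSet.subset hfR)
    (fun x hx y hy => hCsep x (Set.support_indicator_subset hx) y (hfR hy)) hgR0 hgR hfgR hgRdist hp
  exact ⟨g, hg0, hg, Set.indicator_self_add_compl _ f ▸ hfg,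
    fun γ hγ => (hgdist γ hγ).trans (by omega)⟩

end AlmostInvariant

open AlmostInvariant in
theorem stmt_3_general {G : Type*} [Group G] (S : Finset G)
    (hgen : Subgroup.closure (S : Set G) = ⊤)
    (ε : ℝ) (N : ℕ) (f : G → ℝ)
    (hf0 : ∀ γ, 0 ≤ f γ)
    (hl2 : ∑' γ, f γ ^ 2 = 1)
    (hinv : ∀ s ∈ S, ∑' γ, (f γ - f (γ * s)) ^ 2 ≤ ε ^ 2)
    (hsupp : (Function.support f).Finite)
    (hcard : Nat.card (Function.support f) ≤ N) :
    ∃ g : G → ℝ, (∀ γ, 0 ≤ g γ) ∧ (∑' γ, g γ ^ 2 = 1) ∧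
      (∀ s ∈ S, ∑' γ, (g γ - g (γ * s)) ^ 2 ≤ ε ^ 2) ∧
      Function.support g ⊆ wordBall (S : Set G) (4 * (N + 2) * N) := by
  by_cases hball : ∀ γ, γ ∈ wordBall (S : Set G) (4 * (N + 2) * N)
  · exact ⟨f, hf0, hl2, hinv, fun γ _ => hball γ⟩
  obtain ⟨z, hz⟩ := not_forall.1 hball
  have hS := mulCayley_connected hgen
  have hA : #hsupp.toFinset ≤ N := by
    rwa [Nat.card_coe_set_eq, Set.ncard_eq_toFinset_card _ hsupp] at hcard
  have hN : 2 * N ≤ 4 * (N + 2) * N := Nat.mul_le_mul_right N (by omega)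
  have hfar : 2 * #hsupp.toFinset ≤ (mulCayley (S : Set G)).dist 1 z := by
    by_contra h
    exact hz (mem_wordBall_of_dist_le hS (by omega))
  obtain ⟨g, hg0, -, ⟨hnorm, henergy⟩, hgdist⟩ :=
    exists_sameEnergy_dist_le hS _ hfar f hf0 (by simp)
  exact ⟨g, hg0, hnorm.trans hl2, fun s hs => (henergy s hs).trans_le (hinv s hs),
    fun γ hγ => mem_wordBall_of_dist_le hS ((hgdist γ hγ).trans (by omega))⟩

theorem stmt_3 {G : Type*} [Group G] (S : Finset G)
    (hgen : Subgroup.closure (S : Set G) = ⊤)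
    (ε : ℝ) (hε : 0 < ε) (N : ℕ) (f : G → ℝ)
    (hf0 : ∀ γ, 0 ≤ f γ)
    (hl2 : ∑' γ, f γ ^ 2 = 1)
    (hinv : ∀ s ∈ S, ∑' γ, (f γ - f (γ * s)) ^ 2 ≤ ε ^ 2)
    (hsupp : (Function.support f).Finite)
    (hcard : Nat.card (Function.support f) ≤ N) :
    ∃ g : G → ℝ, (∀ γ, 0 ≤ g γ) ∧ (∑' γ, g γ ^ 2 = 1) ∧
      (∀ s ∈ S, ∑' γ, (g γ - g (γ * s)) ^ 2 ≤ ε ^ 2) ∧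
      Function.support g ⊆ wordBall (S : Set G) (4 * (N + 2) * N) :=
  stmt_3_general S hgen ε N f hf0 hl2 hinv hsupp hcard
end

section
/- Let I be an index set and, for each i ∈ I, let G_i be a group generated by a finite subset S_i. Assume: for every ε > 0 there exist M > 0 and functions f_i : G_i → [0,∞) (i ∈ I) such that Σ_{γ∈G_i} f_i(γ)² = 1, Σ_{γ∈G_i} f_i(γ) ≤ M, and Σ_{γ∈G_i} (f_i(γ) − f_i(γs))² ≤ ε² for every s ∈ S_i. Then: for every ε > 0 there exist N ∈ ℕ and functions g_i : G_i → [0,∞) (i ∈ I) such that Σ_{γ∈G_i} g_i(γ)² = 1, Σ_{γ∈G_i} (g_i(γ) − g_i(γs))² ≤ ε² for every s ∈ S_i, and the support of each g_i has cardinality at most N. -/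
/-!
Fix a threshold `t > 0` and replace `f` by its soft thresholding `max (f - t) 0`. This map is
1-Lipschitz, so it does not increase the translation defects `∑ (f γ - f (γ s))²`; its support
`{f > t}` has at most `‖f‖₁ / t` points; and since `f² ≤ max (f - t) 0 ² + 2 t f` pointwise, it
keeps at least `1 - 2 t ‖f‖₁` of the `ℓ²`-mass. With `t = 1 / (4M)` the mass is at least `1/2`,
so normalizing at most doubles the defects, and the support has at most `4M²` points.
-/

open Function

noncomputable def softThreshold (t x : ℝ) : ℝ := max (x - t) 0

lemma softThreshold_nonneg (t x : ℝ) : 0 ≤ softThreshold t x := le_max_right _ _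

lemma softThreshold_ne_zero_iff {t x : ℝ} : softThreshold t x ≠ 0 ↔ t < x := by
  simp only [softThreshold, ne_eq, max_eq_right_iff, not_le, sub_pos]

lemma softThreshold_le {t x : ℝ} (ht : 0 ≤ t) (hx : 0 ≤ x) : softThreshold t x ≤ x :=
  max_le (by linarith) hx

lemma lipschitzWith_softThreshold (t : ℝ) : LipschitzWith 1 (softThreshold t) :=
  LipschitzWith.of_dist_le_mul fun x y => by
    simpa [Real.dist_eq, softThreshold] using abs_max_sub_max_le_abs (x - t) (y - t) 0

lemma sq_le_sq_softThreshold_add {t x : ℝ} (ht : 0 ≤ t) (hx : 0 ≤ x) :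
    x ^ 2 ≤ softThreshold t x ^ 2 + 2 * t * x := by
  rcases le_total x t with hxt | htx
  · nlinarith [sq_nonneg (softThreshold t x)]
  · rw [softThreshold, max_eq_left (sub_nonneg.2 htx)]
    nlinarith

section

variable {α : Type*}

lemma Summable.sq_sub {u v : α → ℝ} (hu : Summable fun x => u x ^ 2)
    (hv : Summable fun x => v x ^ 2) : Summable fun x => (u x - v x) ^ 2 :=
  ((hu.mul_left 2).add (hv.mul_left 2)).of_nonneg_of_le (fun _ => sq_nonneg _)
    fun x => by nlinarith [sq_nonneg (u x + v x)]

lemma tsum_sq_sub_comp_le {φ : ℝ → ℝ} (hφ : LipschitzWith 1 φ) {u v : α → ℝ}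
    (huv : Summable fun x => (u x - v x) ^ 2) :
    ∑' x, (φ (u x) - φ (v x)) ^ 2 ≤ ∑' x, (u x - v x) ^ 2 := by
  have hle : ∀ x, (φ (u x) - φ (v x)) ^ 2 ≤ (u x - v x) ^ 2 := fun x => by
    have := hφ.dist_le_mul (u x) (v x)
    rw [NNReal.coe_one, one_mul, Real.dist_eq, Real.dist_eq] at this
    exact sq_le_sq.2 this
  exact (huv.of_nonneg_of_le (fun _ => sq_nonneg _) hle).tsum_le_tsum hle huv

lemma finite_setOf_lt_of_summable {f : α → ℝ} (hf : Summable f) {t : ℝ} (ht : 0 < t) :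
    {x | t < f x}.Finite := by
  simpa [not_le] using
    Filter.eventually_cofinite.1 (hf.tendsto_cofinite_zero.eventually_le_const ht)

lemma mul_ncard_setOf_lt_le_tsum {f : α → ℝ} (hf0 : ∀ x, 0 ≤ f x) (hf : Summable f) {t : ℝ}
    (ht : 0 < t) : t * {x | t < f x}.ncard ≤ ∑' x, f x := by
  have hfin := finite_setOf_lt_of_summable hf ht
  calc t * {x | t < f x}.ncard = ∑ _x ∈ hfin.toFinset, t := by
        rw [Finset.sum_const, nsmul_eq_mul, Set.ncard_eq_toFinset_card _ hfin, mul_comm]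
    _ ≤ ∑ x ∈ hfin.toFinset, f x := Finset.sum_le_sum fun x hx => (hfin.mem_toFinset.1 hx).le
    _ ≤ ∑' x, f x := hf.sum_le_tsum _ fun x _ => hf0 x

lemma summable_sq_of_tsum_sq_eq_one {f : α → ℝ} (hf2 : ∑' x, f x ^ 2 = 1) :
    Summable fun x => f x ^ 2 := by
  by_contra hns
  rw [tsum_eq_zero_of_not_summable hns] at hf2
  exact zero_ne_one hf2

lemma one_sub_le_tsum_sq_softThreshold {f : α → ℝ} (hf0 : ∀ x, 0 ≤ f x)
    (hf2 : ∑' x, f x ^ 2 = 1) (hf : Summable f) {t : ℝ} (ht : 0 ≤ t) :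
    1 - 2 * t * ∑' x, f x ≤ ∑' x, softThreshold t (f x) ^ 2 := by
  have hsq := summable_sq_of_tsum_sq_eq_one hf2
  have hsoft : Summable fun x => softThreshold t (f x) ^ 2 :=
    hsq.of_nonneg_of_le (fun _ => sq_nonneg _) fun x =>
      pow_le_pow_left₀ (softThreshold_nonneg t _) (softThreshold_le ht (hf0 x)) 2
  calc 1 - 2 * t * ∑' x, f x = ∑' x, f x ^ 2 - ∑' x, 2 * t * f x := by
        rw [hf2, tsum_mul_left]
    _ ≤ ∑' x, (softThreshold t (f x) ^ 2 + 2 * t * f x) - ∑' x, 2 * t * f x := by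
        refine sub_le_sub_right (hsq.tsum_le_tsum (fun x => ?_) (hsoft.add (hf.mul_left _))) _
        exact sq_le_sq_softThreshold_add ht (hf0 x)
    _ = ∑' x, softThreshold t (f x) ^ 2 := by
        rw [hsoft.tsum_add (hf.mul_left _), add_sub_cancel_right]

theorem exists_finite_support_approx {f : α → ℝ} {M : ℝ} (hM : 0 < M) (hf0 : ∀ x, 0 ≤ f x)
    (hf2 : ∑' x, f x ^ 2 = 1) (hf : Summable f) (hfM : ∑' x, f x ≤ M) :
    ∃ g : α → ℝ, (∀ x, 0 ≤ g x) ∧ ∑' x, g x ^ 2 = 1 ∧ (support g).Finite ∧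
      Nat.card (support g) ≤ ⌈4 * M ^ 2⌉₊ ∧
      ∀ e : α ≃ α, ∑' x, (g x - g (e x)) ^ 2 ≤ 2 * ∑' x, (f x - f (e x)) ^ 2 := by
  obtain ⟨t, ht, htM⟩ : ∃ t : ℝ, 0 < t ∧ 4 * M * t = 1 :=
    ⟨1 / (4 * M), by positivity, by field_simp⟩
  set c := ∑' x, softThreshold t (f x) ^ 2
  have hc : 1 / 2 ≤ c := by
    have hmass := one_sub_le_tsum_sq_softThreshold hf0 hf2 hf ht.le
    nlinarith
  have hsqrt : √c ≠ 0 := (Real.sqrt_pos.2 (by linarith)).ne'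
  have hsq_div : ∀ a, (a / √c) ^ 2 = a ^ 2 / c := fun a => by
    rw [div_pow, Real.sq_sqrt (by linarith)]
  have hsupp : support (fun x => softThreshold t (f x) / √c) = {x | t < f x} := by
    ext x
    simp [hsqrt, softThreshold_ne_zero_iff]
  refine ⟨fun x => softThreshold t (f x) / √c,
    fun x => div_nonneg (softThreshold_nonneg _ _) (Real.sqrt_nonneg _), ?_, ?_, ?_, fun e => ?_⟩
  · simp only [hsq_div]
    rw [tsum_div_const, div_self (by positivity)]
  · rw [hsupp]
    exact finite_setOf_lt_of_summable hf ht
  · rw [hsupp, Nat.card_coe_set_eq]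
    have hcard : ({x | t < f x}.ncard : ℝ) ≤ 4 * M ^ 2 := by
      calc ({x | t < f x}.ncard : ℝ) ≤ M / t := by
            rw [le_div_iff₀' ht]
            exact (mul_ncard_setOf_lt_le_tsum hf0 hf ht).trans hfM
        _ = 4 * M ^ 2 := by rw [div_eq_iff ht.ne']; linear_combination -M * htM
    exact Nat.cast_le.1 (hcard.trans (Nat.le_ceil _))
  · have hsq := summable_sq_of_tsum_sq_eq_one hf2
    have hsqe : Summable fun x => f (e x) ^ 2 := (e.summable_iff (f := fun x => f x ^ 2)).2 hsq
    calc ∑' x, (softThreshold t (f x) / √c - softThreshold t (f (e x)) / √c) ^ 2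
        = (∑' x, (softThreshold t (f x) - softThreshold t (f (e x))) ^ 2) / c := by
          simp only [← sub_div, hsq_div]
          rw [tsum_div_const]
      _ ≤ (∑' x, (f x - f (e x)) ^ 2) / c := div_le_div_of_nonneg_right
          (tsum_sq_sub_comp_le (lipschitzWith_softThreshold t) (hsq.sq_sub hsqe)) (by linarith)
      _ ≤ (∑' x, (f x - f (e x)) ^ 2) / (1 / 2) :=
          div_le_div_of_nonneg_left (tsum_nonneg fun _ => sq_nonneg _) (by norm_num) hc
      _ = 2 * ∑' x, (f x - f (e x)) ^ 2 := by ring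

end

theorem stmt_4_general {I : Type*} (G : I → Type*) [∀ i, Group (G i)]
    (S : ∀ i, Finset (G i))
    (h : ∀ ε : ℝ, 0 < ε → ∃ M : ℝ, 0 < M ∧ ∃ f : ∀ i, G i → ℝ, ∀ i,
      (∀ γ, 0 ≤ f i γ) ∧ (∑' γ, f i γ ^ 2 = 1) ∧
      Summable (f i) ∧ (∑' γ, f i γ ≤ M) ∧
      (∀ s ∈ S i, ∑' γ, (f i γ - f i (γ * s)) ^ 2 ≤ ε ^ 2)) :
    ∀ ε : ℝ, 0 < ε → ∃ N : ℕ, ∃ g : ∀ i, G i → ℝ, ∀ i,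
      (∀ γ, 0 ≤ g i γ) ∧ (∑' γ, g i γ ^ 2 = 1) ∧
      (Function.support (g i)).Finite ∧ Nat.card (Function.support (g i)) ≤ N ∧
      (∀ s ∈ S i, ∑' γ, (g i γ - g i (γ * s)) ^ 2 ≤ ε ^ 2) := by
  intro ε hε
  obtain ⟨M, hM, f, hf⟩ := h (ε / 2) (by positivity)
  choose g hg0 hg2 hgfin hgcard hgtrans using fun i =>
    have ⟨hf0, hf2, hf1, hfM, _⟩ := hf i
    exists_finite_support_approx hM hf0 hf2 hf1 hfM
  refine ⟨⌈4 * M ^ 2⌉₊, g, fun i => ⟨hg0 i, hg2 i, hgfin i, hgcard i, fun s hs => ?_⟩⟩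
  calc ∑' γ, (g i γ - g i (γ * s)) ^ 2 ≤ 2 * ∑' γ, (f i γ - f i (γ * s)) ^ 2 :=
        hgtrans i (Equiv.mulRight s)
    _ ≤ 2 * (ε / 2) ^ 2 := by gcongr; exact (hf i).2.2.2.2 s hs
    _ ≤ ε ^ 2 := by nlinarith

theorem stmt_4 {I : Type*} (G : I → Type*) [∀ i, Group (G i)]
    (S : ∀ i, Finset (G i))
    (hgen : ∀ i, Subgroup.closure ((S i : Set (G i))) = ⊤)
    (h : ∀ ε : ℝ, 0 < ε → ∃ M : ℝ, 0 < M ∧ ∃ f : ∀ i, G i → ℝ, ∀ i,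
      (∀ γ, 0 ≤ f i γ) ∧ (∑' γ, f i γ ^ 2 = 1) ∧
      Summable (f i) ∧ (∑' γ, f i γ ≤ M) ∧
      (∀ s ∈ S i, ∑' γ, (f i γ - f i (γ * s)) ^ 2 ≤ ε ^ 2)) :
    ∀ ε : ℝ, 0 < ε → ∃ N : ℕ, ∃ g : ∀ i, G i → ℝ, ∀ i,
      (∀ γ, 0 ≤ g i γ) ∧ (∑' γ, g i γ ^ 2 = 1) ∧
      (Function.support (g i)).Finite ∧ Nat.card (Function.support (g i)) ≤ N ∧
      (∀ s ∈ S i, ∑' γ, (g i γ - g i (γ * s)) ^ 2 ≤ ε ^ 2) :=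
  stmt_4_general G S h
end

section
/- Let I be an index set and, for each i ∈ I, let G_i be a group generated by a finite subset S_i. Assume: for every ε > 0 there exist N ∈ ℕ and functions f_i : G_i → [0,∞) (i ∈ I) such that Σ_{γ∈G_i} f_i(γ)² = 1, Σ_{γ∈G_i} (f_i(γ) − f_i(γs))² ≤ ε² for every s ∈ S_i, and the support of each f_i has cardinality at most N. Then the family {(G_i, S_i)}_{i∈I} is uniformly amenable: for every ε > 0 there exist D ∈ ℕ and functions g_i : G_i → [0,∞) (i ∈ I) such that Σ_{γ∈G_i} g_i(γ)² = 1, Σ_{γ∈G_i} (g_i(γ) − g_i(γs))² ≤ ε² for every s ∈ S_i, and the support of each g_i is contained in the word-metric ball B(1_{G_i}, D). -/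
section WB
variable {G : Type*} [Group G] {S : Set G}

lemma one_mem_wordBall (D : ℕ) : (1 : G) ∈ wordBall S D :=
  ⟨[], by simp, by simp, by simp⟩

lemma wordBall_mono {m n : ℕ} (h : m ≤ n) : wordBall S m ⊆ wordBall S n := by
  rintro g ⟨l, hl, hx, hp⟩
  exact ⟨l, hl.trans h, hx, hp⟩

lemma wordBall_mul {a b : G} {m n : ℕ} (ha : a ∈ wordBall S m) (hb : b ∈ wordBall S n) :
    a * b ∈ wordBall S (m + n) := by
  obtain ⟨l, hl, hx, hp⟩ := ha
  obtain ⟨l', hl', hx', hp'⟩ := hb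
  exact ⟨l ++ l', by simpa using Nat.add_le_add hl hl',
    by intro x hx''; rcases List.mem_append.1 hx'' with h | h; exacts [hx x h, hx' x h],
    by simp [hp, hp']⟩

lemma wordBall_inv {a : G} {m : ℕ} (ha : a ∈ wordBall S m) : a⁻¹ ∈ wordBall S m := by
  obtain ⟨l, hl, hx, hp⟩ := ha
  refine ⟨(l.map fun x => x⁻¹).reverse, by simpa using hl, ?_, ?_⟩
  · intro x hxm
    simp only [List.mem_reverse, List.mem_map] at hxm
    obtain ⟨y, hy, rfl⟩ := hxm
    rcases hx y hy with h | h
    · exact Or.inr (by simpa using h)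
    · exact Or.inl h
  · rw [← List.prod_inv_reverse, hp]

lemma single_mem_wordBall {x : G} (hx : x ∈ S ∨ x⁻¹ ∈ S) : x ∈ wordBall S 1 :=
  ⟨[x], by simp, by simpa using hx, by simp⟩

lemma wordBall_succ {n : ℕ} {g : G} (hg : g ∈ wordBall S (n + 1)) :
    g ∈ wordBall S n ∨ ∃ a ∈ wordBall S n, ∃ x, (x ∈ S ∨ x⁻¹ ∈ S) ∧ g = a * x := by
  obtain ⟨l, hl, hx, hp⟩ := hg
  rcases l.eq_nil_or_concat with rfl | ⟨L, b, rfl⟩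
  · exact Or.inl ⟨[], by simp, by simp, hp⟩
  · refine Or.inr ⟨L.prod, ⟨L, ?_, fun x hxm => hx x (by simp [hxm]), rfl⟩, b,
      hx b (by simp), by simp [← hp, List.concat_eq_append]⟩
    have := hl
    simp only [List.length_concat] at this
    omega

lemma exists_mem_wordBall (hgen : Subgroup.closure S = ⊤) (g : G) :
    ∃ m, g ∈ wordBall S m := by
  let H : Subgroup G :=
    { carrier := {g | ∃ m, g ∈ wordBall S m}
      one_mem' := ⟨0, one_mem_wordBall 0⟩
      mul_mem' := by rintro a b ⟨m, hm⟩ ⟨n, hn⟩; exact ⟨m + n, wordBall_mul hm hn⟩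
      inv_mem' := by rintro a ⟨m, hm⟩; exact ⟨m, wordBall_inv hm⟩ }
  have hS : S ⊆ H.carrier := fun s hs => ⟨1, single_mem_wordBall (Or.inl hs)⟩
  have : Subgroup.closure S ≤ H := (Subgroup.closure_le H).2 hS
  rw [hgen] at this
  exact this (Subgroup.mem_top g)

lemma wordBall_eq_univ_of_stab (hgen : Subgroup.closure S = ⊤) {n : ℕ}
    (h : wordBall S n = wordBall S (n + 1)) : wordBall S n = Set.univ := by
  have hstab : ∀ m, wordBall S (n + m) = wordBall S n := by
    intro m
    induction m with
    | zero => rfl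
    | succ k ih =>
      apply Set.Subset.antisymm
      · intro g hg
        rcases wordBall_succ (by rwa [show n + (k+1) = (n+k) + 1 by ring] at hg) with hg' | hg'
        · rwa [ih] at hg'
        · obtain ⟨a, ha, x, hxS, rfl⟩ := hg'
          rw [ih] at ha
          rw [h]
          exact wordBall_mul ha (single_mem_wordBall hxS)
      · exact wordBall_mono (by omega)
  apply Set.eq_univ_of_forall
  intro g
  obtain ⟨m, hm⟩ := exists_mem_wordBall hgen g
  rcases le_or_gt m n with hmn | hmn
  · exact wordBall_mono hmn hm
  · have := hstab (m - n)
    rw [show n + (m - n) = m by omega] at this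
    rwa [this] at hm

lemma exists_mem_wordBall_notMem (hgen : Subgroup.closure S = ⊤) {R : ℕ}
    (hne : wordBall S R ≠ Set.univ) (B : Finset G) (hB : B.card < R) :
    ∃ μ : G, μ ∈ wordBall S R ∧ μ ∉ B := by
  letI := Classical.decEq G
  have hk : ∀ k, k < R → ∃ x, x ∈ wordBall S (k + 1) ∧ x ∉ wordBall S k := by
    intro k hkR
    by_contra hc
    push_neg at hc
    have heq : wordBall S k = wordBall S (k + 1) :=
      Set.Subset.antisymm (wordBall_mono (by omega)) (fun x hx => hc x hx)
    exact hne (Set.eq_univ_of_univ_subset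
      ((wordBall_eq_univ_of_stab hgen heq) ▸ wordBall_mono (le_of_lt hkR)))
  have hch : ∀ k, ∃ x, k < R → (x ∈ wordBall S (k + 1) ∧ x ∉ wordBall S k) := by
    intro k
    by_cases hkr : k < R
    · obtain ⟨x, hx⟩ := hk k hkr
      exact ⟨x, fun _ => hx⟩
    · exact ⟨1, fun hh => absurd hh hkr⟩
  choose ch hch' using hch
  by_contra hc
  push_neg at hc
  have hsub : (Finset.range R).image ch ⊆ B := by
    intro x hx
    simp only [Finset.mem_image, Finset.mem_range] at hx
    obtain ⟨k, hkR, rfl⟩ := hx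
    exact hc _ (wordBall_mono (by omega) (hch' k hkR).1)
  have hinj : Set.InjOn ch (Finset.range R) := by
    intro a ha b hb hab
    simp only [Finset.coe_range, Set.mem_Iio] at ha hb
    by_contra hne'
    rcases Nat.lt_or_ge a b with hlt | hge
    · exact ((hch' b hb).2) (hab ▸ wordBall_mono (by omega) (hch' a ha).1)
    · have hlt : b < a := by omega
      exact ((hch' a ha).2) (hab ▸ wordBall_mono (by omega) (hch' b hb).1)
  have := Finset.card_image_of_injOn hinj
  rw [Finset.card_range] at this
  have := Finset.card_le_card hsub
  omega
end WB

section Comp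
variable {G : Type*} [Group G]

open Classical in
noncomputable def adjStep (S T A : Finset G) : Finset G :=
  A ∪ T.filter (fun b => ∃ a ∈ A, ∃ s ∈ S, a * s = b ∨ b * s = a)

noncomputable def comp (S T : Finset G) (N : ℕ) (a : G) : Finset G :=
  (adjStep S T)^[N] {a}

variable {S T : Finset G} {N : ℕ}

open Classical in
lemma mem_adjStep {A : Finset G} {b : G} :
    b ∈ adjStep S T A ↔ b ∈ A ∨ (b ∈ T ∧ ∃ a ∈ A, ∃ s ∈ S, a * s = b ∨ b * s = a) := by
  simp [adjStep, Finset.mem_union, Finset.mem_filter, and_assoc]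

lemma subset_adjStep {A : Finset G} : A ⊆ adjStep S T A := fun x hx => mem_adjStep.2 (Or.inl hx)

lemma adjStep_mono {A B : Finset G} (h : A ⊆ B) : adjStep S T A ⊆ adjStep S T B := by
  intro x hx
  rcases mem_adjStep.1 hx with hx' | ⟨hT, a, ha, hs⟩
  · exact subset_adjStep (h hx')
  · exact mem_adjStep.2 (Or.inr ⟨hT, a, h ha, hs⟩)

lemma adjStep_subset {A : Finset G} (hA : A ⊆ T) : adjStep S T A ⊆ T := by
  intro x hx
  rcases mem_adjStep.1 hx with hx' | ⟨hT, _⟩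
  · exact hA hx'
  · exact hT

lemma iter_subset_T {a : G} (ha : a ∈ T) (n : ℕ) : (adjStep S T)^[n] {a} ⊆ T := by
  induction n with
  | zero => simpa using ha
  | succ k ih => rw [Function.iterate_succ_apply']; exact adjStep_subset ih

lemma mem_iter_self (a : G) (n : ℕ) : a ∈ (adjStep S T)^[n] {a} := by
  induction n with
  | zero => simp
  | succ k ih => rw [Function.iterate_succ_apply']; exact subset_adjStep ih

lemma iter_mono_n {a : G} {m n : ℕ} (h : m ≤ n) :
    (adjStep S T)^[m] {a} ⊆ (adjStep S T)^[n] {a} := by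
  induction n with
  | zero => simpa [Nat.le_zero.1 h]
  | succ k ih =>
    rcases Nat.lt_or_ge m (k+1) with hm | hm
    · rw [Function.iterate_succ_apply']
      exact (ih (by omega)).trans subset_adjStep
    · have : m = k + 1 := by omega
      simp [this]

lemma mem_comp_self (a : G) : a ∈ comp S T N a := mem_iter_self a N

lemma comp_subset_T {a : G} (ha : a ∈ T) : comp S T N a ⊆ T := iter_subset_T ha N

lemma adjStep_comp (hT : T.card ≤ N) {a : G} (ha : a ∈ T) :
    adjStep S T (comp S T N a) = comp S T N a := by
  by_contra hc
  -- all steps are strict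
  have hstrict : ∀ m ≤ N, (adjStep S T)^[m] {a} ≠ (adjStep S T)^[m+1] {a} := by
    intro m hm heq
    have hfix : ∀ j, (adjStep S T)^[m + j] {a} = (adjStep S T)^[m] {a} := by
      intro j
      induction j with
      | zero => rfl
      | succ k ih =>
        rw [show m + (k+1) = (m + k) + 1 by ring, Function.iterate_succ_apply', ih,
          show adjStep S T ((adjStep S T)^[m] {a}) = (adjStep S T)^[m+1] {a} from
            (Function.iterate_succ_apply' (adjStep S T) m {a}).symm, ← heq]
    apply hc
    have h1 := hfix (N - m)
    have h2 := hfix (N - m + 1)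
    rw [show m + (N - m) = N by omega] at h1
    rw [show m + (N - m + 1) = N + 1 by omega] at h2
    show adjStep S T ((adjStep S T)^[N] {a}) = (adjStep S T)^[N] {a}
    rw [show adjStep S T ((adjStep S T)^[N] {a}) = (adjStep S T)^[N+1] {a} from
      (Function.iterate_succ_apply' (adjStep S T) N {a}).symm, h1, h2]
  have hcard : ∀ n ≤ N + 1, n + 1 ≤ ((adjStep S T)^[n] {a}).card := by
    intro n hn
    induction n with
    | zero => simp
    | succ k ih =>
      have hssub : (adjStep S T)^[k] {a} ⊂ (adjStep S T)^[k+1] {a} :=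
        lt_of_le_of_ne (iter_mono_n (by omega)) (hstrict k (by omega))
      have := Finset.card_lt_card hssub
      have := ih (by omega)
      omega
  have h1 := hcard (N + 1) le_rfl
  have h2 := Finset.card_le_card (iter_subset_T (S := S) ha (N + 1))
  omega

lemma comp_trans (hT : T.card ≤ N) {a b : G} (ha : a ∈ T) (hb : b ∈ comp S T N a) :
    comp S T N b ⊆ comp S T N a := by
  show (adjStep S T)^[N] {b} ⊆ comp S T N a
  have : ∀ n, (adjStep S T)^[n] {b} ⊆ comp S T N a := by
    intro n
    induction n with
    | zero => simpa using hb
    | succ k ih =>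
      rw [Function.iterate_succ_apply']
      exact (adjStep_mono ih).trans (le_of_eq (adjStep_comp hT ha))
  exact this N

lemma comp_symm (hT : T.card ≤ N) (hN : 1 ≤ N) {a b : G} (ha : a ∈ T)
    (hb : b ∈ comp S T N a) : a ∈ comp S T N b := by
  have haux : ∀ n, ∀ c, c ∈ (adjStep S T)^[n] {a} → a ∈ comp S T N c := by
    intro n
    induction n with
    | zero =>
      intro c hc
      rw [Function.iterate_zero_apply, Finset.mem_singleton] at hc
      rw [hc]
      exact mem_comp_self a
    | succ k ih =>
      intro c hc
      rw [Function.iterate_succ_apply'] at hc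
      rcases mem_adjStep.1 hc with hc' | ⟨hcT, a', ha', s, hsS, hadj⟩
      · exact ih c hc'
      · have ha'T : a' ∈ T := iter_subset_T ha k ha'
        have ha'cb : a' ∈ comp S T N c := by
          apply iter_mono_n hN
          rw [show (1:ℕ) = 0 + 1 by rfl, Function.iterate_succ_apply',
            Function.iterate_zero_apply]
          exact mem_adjStep.2 (Or.inr ⟨ha'T, c, Finset.mem_singleton_self c, s, hsS,
            Or.symm hadj⟩)
        exact comp_trans hT hcT ha'cb (ih a' ha')
  exact haux N b hb

lemma comp_eq_of_mem (hT : T.card ≤ N) (hN : 1 ≤ N) {a b x : G} (ha : a ∈ T) (hb : b ∈ T)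
    (hxa : x ∈ comp S T N a) (hxb : x ∈ comp S T N b) : comp S T N a = comp S T N b := by
  have hxT : x ∈ T := comp_subset_T ha hxa
  have h1 : comp S T N a = comp S T N x :=
    le_antisymm (comp_trans hT hxT (comp_symm hT hN ha hxa)) (comp_trans hT ha hxa)
  have h2 : comp S T N b = comp S T N x :=
    le_antisymm (comp_trans hT hxT (comp_symm hT hN hb hxb)) (comp_trans hT hb hxb)
  rw [h1, h2]

lemma comp_word {a b : G} (n : ℕ) (hb : b ∈ (adjStep S T)^[n] {a}) :
    a⁻¹ * b ∈ wordBall (S : Set G) n := by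
  induction n generalizing b with
  | zero =>
    rw [Function.iterate_zero_apply, Finset.mem_singleton] at hb
    simpa [hb] using one_mem_wordBall (S := (S : Set G)) 0
  | succ k ih =>
    rw [Function.iterate_succ_apply'] at hb
    rcases mem_adjStep.1 hb with hb' | ⟨hbT, a', ha', s, hsS, hadj⟩
    · exact wordBall_mono (by omega) (ih hb')
    · rcases hadj with h | h
      · have : a⁻¹ * b = (a⁻¹ * a') * s := by rw [← h]; group
        rw [this]
        exact wordBall_mul (ih ha') (single_mem_wordBall (Or.inl hsS))
      · have : a⁻¹ * b = (a⁻¹ * a') * s⁻¹ := by rw [← h]; group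
        rw [this]
        exact wordBall_mul (ih ha') (single_mem_wordBall (Or.inr (by simpa using hsS)))

lemma comp_closure (hT : T.card ≤ N) {a x s : G} (ha : a ∈ T) (hx : x ∈ comp S T N a)
    (hs : s ∈ S) (hxs : x * s ∈ T) : x * s ∈ comp S T N a := by
  rw [← adjStep_comp hT ha]
  exact mem_adjStep.2 (Or.inr ⟨hxs, x, hx, s, hs, Or.inl rfl⟩)

lemma comp_closure' (hT : T.card ≤ N) {a x s : G} (ha : a ∈ T) (hx : x ∈ comp S T N a)
    (hs : s ∈ S) (hxs : x * s⁻¹ ∈ T) : x * s⁻¹ ∈ comp S T N a := by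
  rw [← adjStep_comp hT ha]
  exact mem_adjStep.2 (Or.inr ⟨hxs, x, hx, s, hs, Or.inr (by group)⟩)

end Comp

section Place
variable {G : Type*} [Group G]

open Classical in
lemma place (S : Finset G) (hgen : Subgroup.closure (S : Set G) = ⊤) (N R : ℕ)
    (hne : wordBall (S : Set G) R ≠ Set.univ) (hR : N ^ 3 < R) (rep : Finset G → G) :
    ∀ F : Finset (Finset G), F.card ≤ N → (∀ C ∈ F, C.card ≤ N) →
    ∃ μ : Finset G → G, (∀ C ∈ F, μ C ∈ wordBall (S : Set G) R) ∧
      ∀ C ∈ F, ∀ C' ∈ F, C ≠ C' →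
        Disjoint (C.image fun x => μ C * ((rep C)⁻¹ * x))
          (C'.image fun x => μ C' * ((rep C')⁻¹ * x)) := by
  intro F
  induction F using Finset.induction_on with
  | empty =>
    intro _ _
    exact ⟨fun _ => 1, by simp, by simp⟩
  | @insert C F hC ih =>
    intro hcard hcards
    have hFcard : F.card ≤ N := le_trans (Finset.card_le_card (Finset.subset_insert C F)) hcard
    obtain ⟨μ₀, hμ₀R, hμ₀d⟩ := ih hFcard (fun C' hC' => hcards C' (Finset.mem_insert_of_mem hC'))
    set occ : Finset G := F.biUnion (fun C' => C'.image fun x => μ₀ C' * ((rep C')⁻¹ * x))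
      with hocc
    have hocccard : occ.card ≤ F.card * N := by
      refine le_trans (Finset.card_biUnion_le) ?_
      calc ∑ C' ∈ F, (C'.image fun x => μ₀ C' * ((rep C')⁻¹ * x)).card
          ≤ ∑ C' ∈ F, N := by
            refine Finset.sum_le_sum fun C' hC' => ?_
            exact le_trans Finset.card_image_le (hcards C' (Finset.mem_insert_of_mem hC'))
        _ = F.card * N := by simp [Finset.sum_const, Nat.smul_one_eq_cast]
    set bad : Finset G := Finset.image₂ (fun o y => o * ((rep C)⁻¹ * y)⁻¹) occ C with hbad
    have hbadcard : bad.card < R := by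
      have h1 : bad.card ≤ occ.card * C.card := Finset.card_image₂_le _ _ _
      have h2 : C.card ≤ N := hcards C (Finset.mem_insert_self C F)
      have h3 : occ.card * C.card ≤ (F.card * N) * N := Nat.mul_le_mul hocccard h2
      have h4 : F.card * N * N ≤ N * N * N := by
        have : F.card ≤ N := hFcard
        exact Nat.mul_le_mul (Nat.mul_le_mul_right _ this) le_rfl
      have : N * N * N = N ^ 3 := by ring
      omega
    obtain ⟨μC, hμCR, hμCbad⟩ := exists_mem_wordBall_notMem hgen hne bad hbadcard
    refine ⟨Function.update μ₀ C μC, ?_, ?_⟩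
    · intro C' hC'
      rcases Finset.mem_insert.1 hC' with rfl | hC'F
      · simp [Function.update_self, hμCR]
      · rw [Function.update_of_ne (fun h => hC (by rw [← h]; exact hC'F))]
        exact hμ₀R C' hC'F
    · intro C₁ h₁ C₂ h₂ hne12
      have key : ∀ C₂ ∈ F, Disjoint (C.image fun x => Function.update μ₀ C μC C * ((rep C)⁻¹ * x))
          (C₂.image fun x => Function.update μ₀ C μC C₂ * ((rep C₂)⁻¹ * x)) := by
        intro C₂ h₂F
        have hne2 : C₂ ≠ C := fun h => hC (h ▸ h₂F)
        rw [Function.update_self, Function.update_of_ne hne2]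
        rw [Finset.disjoint_left]
        rintro z hz1 hz2
        simp only [Finset.mem_image] at hz1
        obtain ⟨x, hxC, hxz⟩ := hz1
        have hzocc : z ∈ occ := Finset.mem_biUnion.2 ⟨C₂, h₂F, hz2⟩
        apply hμCbad
        rw [hbad]
        refine Finset.mem_image₂.2 ⟨z, hzocc, x, hxC, ?_⟩
        rw [← hxz]
        group
      rcases Finset.mem_insert.1 h₁ with rfl | h₁F
      · exact key C₂ ((Finset.mem_insert.1 h₂).resolve_left fun h => hne12 h.symm)
      · rcases Finset.mem_insert.1 h₂ with rfl | h₂F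
        · exact (key C₁ h₁F).symm
        · have hne1 : C₁ ≠ C := fun h => hC (h ▸ h₁F)
          have hne2 : C₂ ≠ C := fun h => hC (h ▸ h₂F)
          rw [Function.update_of_ne hne1, Function.update_of_ne hne2]
          exact hμ₀d C₁ h₁F C₂ h₂F hne12
end Place

section Key
open Finset in
lemma key {G : Type*} [Group G] (S : Finset G) (hgen : Subgroup.closure (S : Set G) = ⊤)
    (N : ℕ) (f : G → ℝ) (h0 : ∀ γ, 0 ≤ f γ) (h1 : ∑' γ, f γ ^ 2 = 1)
    (hfin : (Function.support f).Finite) (hcard : Nat.card (Function.support f) ≤ N) :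
    ∃ g : G → ℝ, (∀ γ, 0 ≤ g γ) ∧ (∑' γ, g γ ^ 2 = 1) ∧
      (∀ s ∈ S, ∑' γ, (g γ - g (γ * s)) ^ 2 ≤ 2 * ∑' γ, (f γ - f (γ * s)) ^ 2) ∧
      Function.support g ⊆ wordBall (S : Set G) (N ^ 3 + N + 1) := by
  classical
  set T : Finset G := hfin.toFinset with hTdef
  have hmemT : ∀ x, x ∈ T ↔ f x ≠ 0 := fun x => by
    rw [hTdef, Set.Finite.mem_toFinset]; rfl
  have hf0 : ∀ x, x ∉ T → f x = 0 := fun x hx => by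
    by_contra hc; exact hx ((hmemT x).2 hc)
  have hTcard : T.card ≤ N := by
    rwa [Nat.card_coe_set_eq, Set.ncard_eq_toFinset_card _ hfin] at hcard
  have h1' : ∑ a ∈ T, f a ^ 2 = 1 := by
    rw [← h1]
    exact (tsum_eq_sum (fun b hb => by rw [hf0 b hb]; ring)).symm
  by_cases hU : wordBall (S : Set G) (N ^ 3 + 1) = Set.univ
  · refine ⟨f, h0, h1, fun s hs => ?_, fun x _ => ?_⟩
    · have hnn : (0:ℝ) ≤ ∑' γ, (f γ - f (γ * s)) ^ 2 :=
        tsum_nonneg (fun γ => sq_nonneg _)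
      linarith
    · exact wordBall_mono (by omega) (hU ▸ Set.mem_univ x)
  -- main case
  have hTne : T.Nonempty := by
    rw [Finset.nonempty_iff_ne_empty]
    intro hE
    rw [hE] at h1'
    simp at h1'
  have hN1 : 1 ≤ N := le_trans (Finset.card_pos.2 hTne) hTcard
  set comps : Finset (Finset G) := T.image (comp S T N) with hcompsdef
  obtain ⟨rep, hrep⟩ : ∃ rep : Finset G → G,
      ∀ C ∈ comps, rep C ∈ T ∧ comp S T N (rep C) = C := by
    refine ⟨fun C => if h : ∃ a, a ∈ T ∧ comp S T N a = C then h.choose else 1, fun C hC => ?_⟩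
    obtain ⟨a, haT, hac⟩ := Finset.mem_image.1 hC
    have hex : ∃ a, a ∈ T ∧ comp S T N a = C := ⟨a, haT, hac⟩
    simp only [dif_pos hex]
    exact ⟨hex.choose_spec.1, hex.choose_spec.2⟩
  have hcompmem : ∀ a ∈ T, comp S T N a ∈ comps := fun a ha => Finset.mem_image_of_mem _ ha
  have hCsubT : ∀ C ∈ comps, C ⊆ T := by
    intro C hC
    obtain ⟨hrT, hrC⟩ := hrep C hC
    rw [← hrC]
    exact comp_subset_T hrT
  have hmemcomp : ∀ C ∈ comps, ∀ x ∈ C, comp S T N x = C := by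
    intro C hC x hx
    obtain ⟨hrT, hrC⟩ := hrep C hC
    have hxT : x ∈ T := hCsubT C hC hx
    have hxr : x ∈ comp S T N (rep C) := by rw [hrC]; exact hx
    rw [← hrC]
    exact comp_eq_of_mem hTcard hN1 hxT hrT (mem_comp_self x) hxr
  obtain ⟨μ, hμR, hμd⟩ := place S hgen N (N ^ 3 + 1) hU (by omega) rep comps
    (le_trans Finset.card_image_le hTcard)
    (fun C hC => le_trans (Finset.card_le_card (hCsubT C hC)) hTcard)
  obtain ⟨φ, hφdef⟩ : ∃ φ : G → G,
      ∀ a, φ a = μ (comp S T N a) * ((rep (comp S T N a))⁻¹ * a) := ⟨_, fun _ => rfl⟩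
  have hφimg : ∀ C ∈ comps, ∀ x ∈ C, φ x = μ C * ((rep C)⁻¹ * x) := by
    intro C hC x hx
    rw [hφdef, hmemcomp C hC x hx]
  have hφD : ∀ a ∈ T, φ a ∈ wordBall (S : Set G) (N ^ 3 + N + 1) := by
    intro a ha
    have hC : comp S T N a ∈ comps := hcompmem a ha
    rw [hφimg _ hC a (mem_comp_self a)]
    have h1 : μ (comp S T N a) ∈ wordBall (S : Set G) (N ^ 3 + 1) := hμR _ hC
    have h2 : (rep (comp S T N a))⁻¹ * a ∈ wordBall (S : Set G) N := by
      apply comp_word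
      show a ∈ comp S T N (rep (comp S T N a))
      rw [(hrep _ hC).2]
      exact mem_comp_self a
    have := wordBall_mul h1 h2
    rwa [show N ^ 3 + 1 + N = N ^ 3 + N + 1 by ring] at this
  have hφinj : ∀ a ∈ T, ∀ b ∈ T, φ a = φ b → a = b := by
    intro a ha b hb hab
    by_cases hcc : comp S T N a = comp S T N b
    · rw [hφdef a, hφdef b, hcc] at hab
      exact mul_left_cancel (mul_left_cancel hab)
    · exfalso
      have hia : φ a ∈ (comp S T N a).image
          (fun x => μ (comp S T N a) * ((rep (comp S T N a))⁻¹ * x)) := by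
        rw [hφdef a]; exact Finset.mem_image_of_mem _ (mem_comp_self a)
      have hib : φ b ∈ (comp S T N b).image
          (fun x => μ (comp S T N b) * ((rep (comp S T N b))⁻¹ * x)) := by
        rw [hφdef b]; exact Finset.mem_image_of_mem _ (mem_comp_self b)
      have := hμd _ (hcompmem a ha) _ (hcompmem b hb) hcc
      rw [Finset.disjoint_left] at this
      exact this hia (hab ▸ hib)
  obtain ⟨g, hgdef⟩ : ∃ g : G → ℝ,
      ∀ h, g h = ∑ a ∈ T, if φ a = h then f a else 0 := ⟨_, fun _ => rfl⟩
  have hgsupp0 : ∀ h, h ∉ T.image φ → g h = 0 := by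
    intro h hh
    rw [hgdef]
    refine Finset.sum_eq_zero fun a ha => ?_
    rw [if_neg]
    intro hc
    exact hh (hc ▸ Finset.mem_image_of_mem φ ha)
  have hgφ : ∀ a ∈ T, g (φ a) = f a := by
    intro a ha
    rw [hgdef]
    rw [Finset.sum_eq_single a (fun b hb hba => if_neg fun hc => hba (hφinj b hb a ha hc))
      (fun hc => absurd ha hc)]
    simp
  have hg0 : ∀ γ, 0 ≤ g γ := by
    intro γ
    rw [hgdef]
    exact Finset.sum_nonneg fun a _ => by by_cases hc : φ a = γ <;> simp [hc, h0 a]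
  have hgsum : ∑' γ, g γ ^ 2 = 1 := by
    calc ∑' γ, g γ ^ 2 = ∑ h ∈ T.image φ, g h ^ 2 :=
          tsum_eq_sum (fun b hb => by rw [hgsupp0 b hb]; ring)
      _ = ∑ a ∈ T, g (φ a) ^ 2 := Finset.sum_image fun a ha b hb => hφinj a ha b hb
      _ = ∑ a ∈ T, f a ^ 2 := Finset.sum_congr rfl fun a ha => by rw [hgφ a ha]
      _ = 1 := h1'
  have hgsupp : Function.support g ⊆ wordBall (S : Set G) (N ^ 3 + N + 1) := by
    intro x hx
    by_cases hc : x ∈ T.image φ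
    · obtain ⟨a, ha, rfl⟩ := Finset.mem_image.1 hc
      exact hφD a ha
    · exact absurd (hgsupp0 x hc) hx
  refine ⟨g, hg0, hgsum, ?_, hgsupp⟩
  -- gradient estimate
  intro s hs
  obtain ⟨fC, hfCdef⟩ : ∃ fC : Finset G → G → ℝ,
      ∀ C x, fC C x = if x ∈ C then f x else 0 := ⟨_, fun _ _ => rfl⟩
  obtain ⟨gC, hgCdef⟩ : ∃ gC : Finset G → G → ℝ,
      ∀ C h, gC C h = if h ∈ C.image (fun x => μ C * ((rep C)⁻¹ * x)) then g h else 0 :=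
    ⟨_, fun _ _ => rfl⟩
  have himgsubΦ : ∀ C ∈ comps, C.image (fun x => μ C * ((rep C)⁻¹ * x)) ⊆ T.image φ := by
    intro C hC y hy
    obtain ⟨x, hx, rfl⟩ := Finset.mem_image.1 hy
    rw [← hφimg C hC x hx]
    exact Finset.mem_image_of_mem φ (hCsubT C hC hx)
  -- Fact B
  have hFactB : ∀ C ∈ comps, ∀ x, gC C (μ C * (rep C)⁻¹ * x) = fC C x := by
    intro C hC x
    rw [hgCdef, hfCdef]
    by_cases hx : x ∈ C
    · rw [if_pos, if_pos hx]
      · have : μ C * (rep C)⁻¹ * x = φ x := by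
          rw [hφimg C hC x hx, mul_assoc]
        rw [this, hgφ x (hCsubT C hC hx)]
      · exact Finset.mem_image.2 ⟨x, hx, by rw [mul_assoc]⟩
    · rw [if_neg, if_neg hx]
      intro hc
      obtain ⟨y, hy, hyx⟩ := Finset.mem_image.1 hc
      rw [← mul_assoc] at hyx
      exact hx (mul_left_cancel hyx ▸ hy)
  -- Fact A
  have hFactA : ∀ h, g h = ∑ C ∈ comps, gC C h := by
    intro h
    by_cases hh : h ∈ T.image φ
    · obtain ⟨a, ha, rfl⟩ := Finset.mem_image.1 hh
      have hC₀ : comp S T N a ∈ comps := hcompmem a ha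
      have hmem : φ a ∈ (comp S T N a).image
          (fun x => μ (comp S T N a) * ((rep (comp S T N a))⁻¹ * x)) := by
        rw [hφdef a]
        exact Finset.mem_image_of_mem _ (mem_comp_self a)
      rw [Finset.sum_eq_single (comp S T N a)]
      · rw [hgCdef, if_pos hmem]
      · intro C hCc hne
        rw [hgCdef, if_neg]
        intro hc
        have := hμd C hCc _ hC₀ hne
        rw [Finset.disjoint_left] at this
        exact this hc hmem
      · intro hc
        exact absurd hC₀ hc
    · rw [hgsupp0 h hh]
      symm
      refine Finset.sum_eq_zero fun C hC => ?_
      rw [hgCdef, if_neg]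
      intro hc
      exact hh (himgsubΦ C hC hc)
  -- Fact D
  have hFactD : ∀ x, ∑ C ∈ comps, (fC C x - fC C (x * s)) ^ 2 ≤ (f x - f (x * s)) ^ 2 := by
    intro x
    have hnotmem : ∀ y, y ∉ T → ∀ C ∈ comps, fC C y = 0 := by
      intro y hy C hC
      rw [hfCdef, if_neg (fun hc => hy (hCsubT C hC hc))]
    have huniq : ∀ y ∈ T, ∀ C ∈ comps, C ≠ comp S T N y → fC C y = 0 := by
      intro y hy C hC hne
      rw [hfCdef]
      rw [if_neg]
      intro hc
      exact hne (hmemcomp C hC y hc).symm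
    by_cases hx : x ∈ T <;> by_cases hxs : x * s ∈ T
    · -- both in T
      have hC₀ : comp S T N x ∈ comps := hcompmem x hx
      have hxsC₀ : x * s ∈ comp S T N x :=
        comp_closure hTcard hx (mem_comp_self x) hs hxs
      have hcomps : comp S T N (x * s) = comp S T N x := hmemcomp _ hC₀ _ hxsC₀
      rw [Finset.sum_eq_single (comp S T N x)]
      · rw [hfCdef, hfCdef, if_pos (mem_comp_self x), if_pos hxsC₀]
      · intro C hC hne
        rw [huniq x hx C hC hne, huniq (x*s) hxs C hC (by rw [hcomps]; exact hne)]
        ring_nf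
      · intro hc; exact absurd hC₀ hc
    · -- x ∈ T, x*s ∉ T
      have hC₀ : comp S T N x ∈ comps := hcompmem x hx
      rw [hf0 _ hxs, Finset.sum_eq_single (comp S T N x)]
      · rw [hfCdef, hfCdef, if_pos (mem_comp_self x), if_neg (fun hc => hxs (hCsubT _ hC₀ hc))]
      · intro C hC hne
        rw [huniq x hx C hC hne, hnotmem _ hxs C hC]
        ring_nf
      · intro hc; exact absurd hC₀ hc
    · -- x ∉ T, x*s ∈ T
      have hC₀ : comp S T N (x * s) ∈ comps := hcompmem _ hxs
      rw [hf0 _ hx, Finset.sum_eq_single (comp S T N (x * s))]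
      · rw [hfCdef, hfCdef, if_pos (mem_comp_self (x * s)),
          if_neg (fun hc => hx (hCsubT _ hC₀ hc))]
      · intro C hC hne
        rw [huniq (x*s) hxs C hC hne, hnotmem _ hx C hC]
        ring_nf
      · intro hc; exact absurd hC₀ hc
    · rw [hf0 _ hx, hf0 _ hxs]
      rw [Finset.sum_eq_zero]
      · simp
      · intro C hC
        rw [hnotmem _ hx C hC, hnotmem _ hxs C hC]
        ring_nf
  -- Fact E
  have hFactE : ∀ h, (g h - g (h * s)) ^ 2 ≤ 2 * ∑ C ∈ comps, (gC C h - gC C (h * s)) ^ 2 := by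
    intro h
    rw [hFactA h, hFactA (h * s), ← Finset.sum_sub_distrib]
    set d : Finset G → ℝ := fun C => gC C h - gC C (h * s) with hd
    have hfilter : ∑ C ∈ comps, d C = ∑ C ∈ comps.filter (fun C => d C ≠ 0), d C :=
      (Finset.sum_filter_ne_zero comps).symm
    have hP2 : (comps.filter (fun C => d C ≠ 0)).card ≤ 2 := by
      have hsub : comps.filter (fun C => d C ≠ 0) ⊆
          comps.filter (fun C => h ∈ C.image (fun x => μ C * ((rep C)⁻¹ * x))) ∪
          comps.filter (fun C => h * s ∈ C.image (fun x => μ C * ((rep C)⁻¹ * x))) := by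
        intro C hC
        rw [Finset.mem_filter] at hC
        obtain ⟨hCc, hdC⟩ := hC
        rw [Finset.mem_union, Finset.mem_filter, Finset.mem_filter]
        by_contra hcon
        push_neg at hcon
        apply hdC
        rw [hd]
        simp only
        rw [hgCdef, hgCdef, if_neg (hcon.1 hCc), if_neg (hcon.2 hCc)]
        ring
      have hone : ∀ (z : G), (comps.filter
          (fun C => z ∈ C.image (fun x => μ C * ((rep C)⁻¹ * x)))).card ≤ 1 := by
        intro z
        rw [Finset.card_le_one]
        intro C₁ hC₁ C₂ hC₂
        rw [Finset.mem_filter] at hC₁ hC₂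
        by_contra hne
        have := hμd C₁ hC₁.1 C₂ hC₂.1 hne
        rw [Finset.disjoint_left] at this
        exact this hC₁.2 hC₂.2
      calc (comps.filter (fun C => d C ≠ 0)).card
          ≤ _ := Finset.card_le_card hsub
        _ ≤ _ + _ := Finset.card_union_le _ _
        _ ≤ 2 := by have := hone h; have := hone (h * s); omega
    calc (∑ C ∈ comps, d C) ^ 2
        = (∑ C ∈ comps.filter (fun C => d C ≠ 0), d C) ^ 2 := by rw [← hfilter]
      _ ≤ (comps.filter (fun C => d C ≠ 0)).card *
            ∑ C ∈ comps.filter (fun C => d C ≠ 0), d C ^ 2 := sq_sum_le_card_mul_sum_sq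
      _ ≤ 2 * ∑ C ∈ comps.filter (fun C => d C ≠ 0), d C ^ 2 := by
          apply mul_le_mul_of_nonneg_right _ (Finset.sum_nonneg fun _ _ => sq_nonneg _)
          exact_mod_cast Nat.cast_le.2 hP2
      _ ≤ 2 * ∑ C ∈ comps, d C ^ 2 := by
          apply mul_le_mul_of_nonneg_left _ (by norm_num)
          exact Finset.sum_le_sum_of_subset_of_nonneg (Finset.filter_subset _ _)
            (fun _ _ _ => sq_nonneg _)
  -- the support finsets
  set W : Finset G := (T.image φ) ∪ (T.image φ).image (fun h => h * s⁻¹) with hW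
  set V : Finset G := T ∪ T.image (fun x => x * s⁻¹) with hV
  have hWzero : ∀ h, h ∉ W → g h = 0 ∧ g (h * s) = 0 := by
    intro h hh
    rw [hW, Finset.mem_union] at hh
    push_neg at hh
    constructor
    · exact hgsupp0 h hh.1
    · apply hgsupp0
      intro hc
      exact hh.2 (Finset.mem_image.2 ⟨h * s, hc, by group⟩)
  have hVzero : ∀ x, x ∉ V → f x = 0 ∧ f (x * s) = 0 := by
    intro x hx
    rw [hV, Finset.mem_union] at hx
    push_neg at hx
    refine ⟨hf0 x hx.1, hf0 _ ?_⟩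
    intro hc
    exact hx.2 (Finset.mem_image.2 ⟨x * s, hc, by group⟩)
  -- per-component change of variables
  have hFactC2 : ∀ C ∈ comps, ∑ h ∈ W, (gC C h - gC C (h * s)) ^ 2 =
      ∑ x ∈ V, (fC C x - fC C (x * s)) ^ 2 := by
    intro C hC
    have hgCzero : ∀ h, h ∉ W → (gC C h - gC C (h * s)) ^ 2 = 0 := by
      intro h hh
      have h1 : gC C h = 0 := by
        rw [hgCdef, if_neg]
        intro hc
        rw [hW, Finset.mem_union] at hh
        push_neg at hh
        exact hh.1 (himgsubΦ C hC hc)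
      have h2 : gC C (h * s) = 0 := by
        rw [hgCdef, if_neg]
        intro hc
        rw [hW, Finset.mem_union] at hh
        push_neg at hh
        exact hh.2 (Finset.mem_image.2 ⟨h * s, himgsubΦ C hC hc, by group⟩)
      rw [h1, h2]; ring
    have hfCzero : ∀ x, x ∉ V → (fC C x - fC C (x * s)) ^ 2 = 0 := by
      intro x hx
      rw [hV, Finset.mem_union] at hx
      push_neg at hx
      have h1 : fC C x = 0 := by
        rw [hfCdef, if_neg (fun hc => hx.1 (hCsubT C hC hc))]
      have h2 : fC C (x * s) = 0 := by
        rw [hfCdef, if_neg]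
        intro hc
        exact hx.2 (Finset.mem_image.2 ⟨x * s, hCsubT C hC hc, by group⟩)
      rw [h1, h2]; ring
    have e : G ≃ G := Equiv.mulLeft (μ C * (rep C)⁻¹)
    calc ∑ h ∈ W, (gC C h - gC C (h * s)) ^ 2
        = ∑' h, (gC C h - gC C (h * s)) ^ 2 := (tsum_eq_sum hgCzero).symm
      _ = ∑' x, (gC C ((Equiv.mulLeft (μ C * (rep C)⁻¹)) x)
            - gC C ((Equiv.mulLeft (μ C * (rep C)⁻¹)) x * s)) ^ 2 :=
          ((Equiv.mulLeft (μ C * (rep C)⁻¹)).tsum_eq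
            (fun h => (gC C h - gC C (h * s)) ^ 2)).symm
      _ = ∑' x, (fC C x - fC C (x * s)) ^ 2 := by
          apply tsum_congr
          intro x
          have e1 : (Equiv.mulLeft (μ C * (rep C)⁻¹)) x = μ C * (rep C)⁻¹ * x := rfl
          rw [e1, hFactB C hC x, show μ C * (rep C)⁻¹ * x * s = μ C * (rep C)⁻¹ * (x * s) by
            rw [mul_assoc], hFactB C hC (x * s)]
      _ = ∑ x ∈ V, (fC C x - fC C (x * s)) ^ 2 := tsum_eq_sum hfCzero
  -- final chain
  calc ∑' γ, (g γ - g (γ * s)) ^ 2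
      = ∑ h ∈ W, (g h - g (h * s)) ^ 2 :=
        tsum_eq_sum (fun h hh => by rw [(hWzero h hh).1, (hWzero h hh).2]; ring)
    _ ≤ ∑ h ∈ W, 2 * ∑ C ∈ comps, (gC C h - gC C (h * s)) ^ 2 :=
        Finset.sum_le_sum fun h _ => hFactE h
    _ = 2 * ∑ C ∈ comps, ∑ h ∈ W, (gC C h - gC C (h * s)) ^ 2 := by
        rw [← Finset.mul_sum, Finset.sum_comm]
    _ = 2 * ∑ C ∈ comps, ∑ x ∈ V, (fC C x - fC C (x * s)) ^ 2 := by
        rw [Finset.sum_congr rfl (fun C hC => hFactC2 C hC)]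
    _ = 2 * ∑ x ∈ V, ∑ C ∈ comps, (fC C x - fC C (x * s)) ^ 2 := by
        rw [Finset.sum_comm]
    _ ≤ 2 * ∑ x ∈ V, (f x - f (x * s)) ^ 2 := by
        apply mul_le_mul_of_nonneg_left _ (by norm_num)
        exact Finset.sum_le_sum fun x _ => hFactD x
    _ = 2 * ∑' x, (f x - f (x * s)) ^ 2 := by
        rw [tsum_eq_sum (f := fun x => (f x - f (x * s)) ^ 2)
          (fun x hx => by show (f x - f (x * s)) ^ 2 = 0
                          rw [(hVzero x hx).1, (hVzero x hx).2]; ring)]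
end Key

theorem stmt_5 {I : Type*} (G : I → Type*) [∀ i, Group (G i)]
    (S : ∀ i, Finset (G i))
    (hgen : ∀ i, Subgroup.closure ((S i : Set (G i))) = ⊤)
    (h : ∀ ε : ℝ, 0 < ε → ∃ N : ℕ, ∃ f : ∀ i, G i → ℝ, ∀ i,
      (∀ γ, 0 ≤ f i γ) ∧ (∑' γ, f i γ ^ 2 = 1) ∧
      (∀ s ∈ S i, ∑' γ, (f i γ - f i (γ * s)) ^ 2 ≤ ε ^ 2) ∧
      (Function.support (f i)).Finite ∧ Nat.card (Function.support (f i)) ≤ N) :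
    ∀ ε : ℝ, 0 < ε → ∃ D : ℕ, ∃ g : ∀ i, G i → ℝ, ∀ i,
      (∀ γ, 0 ≤ g i γ) ∧ (∑' γ, g i γ ^ 2 = 1) ∧
      (∀ s ∈ S i, ∑' γ, (g i γ - g i (γ * s)) ^ 2 ≤ ε ^ 2) ∧
      Function.support (g i) ⊆ wordBall ((S i : Set (G i))) D := by
  intro ε hε
  obtain ⟨N, f, hf⟩ := h (ε / 2) (by positivity)
  refine ⟨N ^ 3 + N + 1, ?_⟩
  have hkey : ∀ i, ∃ g : G i → ℝ, (∀ γ, 0 ≤ g γ) ∧ (∑' γ, g γ ^ 2 = 1) ∧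
      (∀ s ∈ S i, ∑' γ, (g γ - g (γ * s)) ^ 2 ≤ 2 * ∑' γ, (f i γ - f i (γ * s)) ^ 2) ∧
      Function.support g ⊆ wordBall ((S i : Set (G i))) (N ^ 3 + N + 1) := by
    intro i
    obtain ⟨h0, h1, _, hfin, hcard⟩ := hf i
    exact key (S i) (hgen i) N (f i) h0 h1 hfin hcard
  choose g hg0 hg1 hg2 hg3 using hkey
  refine ⟨g, fun i => ⟨hg0 i, hg1 i, fun s hs => ?_, hg3 i⟩⟩
  have hg := hg2 i s hs
  have hfgrad := (hf i).2.2.1 s hs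
  nlinarith [hε]
end

section
/- Let I be an index set, L ∈ ℕ, and for each i ∈ I let G_i be a group generated by a finite subset S_i with #S_i ≤ L. Assume the family {(G_i, S_i)}_{i∈I} is uniformly amenable: for every ε > 0 there exist D ∈ ℕ and functions f_i : G_i → [0,∞) (i ∈ I) such that Σ_{γ∈G_i} f_i(γ)² = 1, Σ_{γ∈G_i} (f_i(γ) − f_i(γs))² ≤ ε² for every s ∈ S_i, and the support of each f_i is contained in the word-metric ball B(1_{G_i}, D). Then: for every ε > 0 there exist M > 0 and functions g_i : G_i → [0,∞) (i ∈ I) such that Σ_{γ∈G_i} g_i(γ)² = 1, Σ_{γ∈G_i} (g_i(γ) − g_i(γs))² ≤ ε² for every s ∈ S_i, and Σ_{γ∈G_i} g_i(γ) ≤ M. -/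
section

open Finset Pointwise

variable {G : Type*} [Group G]

lemma list_prod_mem_pow [DecidableEq G] {T : Finset G} {l : List G} (hl : ∀ x ∈ l, x ∈ T) :
    l.prod ∈ T ^ l.length := by
  induction l with
  | nil => simp
  | cons a l ih =>
    rw [List.prod_cons, List.length_cons, pow_succ']
    exact mul_mem_mul (hl a List.mem_cons_self) (ih fun x hx => hl x (List.mem_cons_of_mem a hx))

lemma wordBall_subset_pow [DecidableEq G] (S : Finset G) (D : ℕ) :
    wordBall (S : Set G) D ⊆ ↑(insert 1 (S ∪ S⁻¹) ^ D) := by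
  rintro _ ⟨l, hlen, hmem, rfl⟩
  refine pow_subset_pow_right (mem_insert_self _ _) hlen (list_prod_mem_pow fun x hx => ?_)
  rcases hmem x hx with hS | hS
  · exact mem_insert_of_mem (mem_union_left _ hS)
  · exact mem_insert_of_mem (mem_union_right _ (mem_inv'.2 hS))

lemma exists_finset_wordBall_subset_card_le (S : Finset G) (D : ℕ) :
    ∃ B : Finset G, wordBall (S : Set G) D ⊆ B ∧ #B ≤ (2 * #S + 1) ^ D := by
  classical
  refine ⟨_, wordBall_subset_pow S D, card_pow_le.trans (Nat.pow_le_pow_left ?_ D)⟩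
  calc #(insert 1 (S ∪ S⁻¹)) ≤ #(S ∪ S⁻¹) + 1 := card_insert_le _ _
    _ ≤ #S + #S⁻¹ + 1 := Nat.add_le_add_right (card_union_le _ _) 1
    _ = 2 * #S + 1 := by rw [card_inv]; ring

lemma sq_tsum_le_card_mul_tsum_sq {α : Type*} {f : α → ℝ} {B : Finset α}
    (hf : Function.support f ⊆ B) : (∑' a, f a) ^ 2 ≤ #B * ∑' a, f a ^ 2 := by
  have hzero : ∀ a ∉ B, f a = 0 := fun a ha => Function.notMem_support.1 fun h => ha (hf h)
  rw [tsum_eq_sum hzero, tsum_eq_sum fun a ha => by simp [hzero a ha]]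
  exact sq_sum_le_card_mul_sum_sq

end

theorem stmt_6_general {I : Type*} (G : I → Type*) [∀ i, Group (G i)]
    (S : ∀ i, Finset (G i))
    (L : ℕ) (hL : ∀ i, (S i).card ≤ L)
    (h : ∀ ε : ℝ, 0 < ε → ∃ D : ℕ, ∃ f : ∀ i, G i → ℝ, ∀ i,
      (∀ γ, 0 ≤ f i γ) ∧ (∑' γ, f i γ ^ 2 = 1) ∧
      (∀ s ∈ S i, ∑' γ, (f i γ - f i (γ * s)) ^ 2 ≤ ε ^ 2) ∧
      Function.support (f i) ⊆ wordBall ((S i : Set (G i))) D) :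
    ∀ ε : ℝ, 0 < ε → ∃ M : ℝ, 0 < M ∧ ∃ g : ∀ i, G i → ℝ, ∀ i,
      (∀ γ, 0 ≤ g i γ) ∧ (∑' γ, g i γ ^ 2 = 1) ∧
      (∀ s ∈ S i, ∑' γ, (g i γ - g i (γ * s)) ^ 2 ≤ ε ^ 2) ∧
      Summable (g i) ∧ (∑' γ, g i γ ≤ M) := by
  intro ε hε
  obtain ⟨D, f, hf⟩ := h ε hε
  refine ⟨√(((2 * L + 1) ^ D : ℕ) : ℝ), by positivity, f, fun i => ?_⟩
  obtain ⟨hpos, hsq, hmove, hsupp⟩ := hf i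
  obtain ⟨B, hB, hcard⟩ := exists_finset_wordBall_subset_card_le (S i) D
  have hfB : Function.support (f i) ⊆ B := hsupp.trans hB
  refine ⟨hpos, hsq, hmove, summable_of_hasFiniteSupport (B.finite_toSet.subset hfB), ?_⟩
  have hcard' : B.card ≤ (2 * L + 1) ^ D :=
    hcard.trans (Nat.pow_le_pow_left (by linarith [hL i]) D)
  have hCS := sq_tsum_le_card_mul_tsum_sq hfB
  rw [hsq, mul_one] at hCS
  exact (le_abs_self _).trans (Real.abs_le_sqrt (hCS.trans (by exact_mod_cast hcard')))

theorem stmt_6 {I : Type*} (G : I → Type*) [∀ i, Group (G i)]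
    (S : ∀ i, Finset (G i))
    (hgen : ∀ i, Subgroup.closure ((S i : Set (G i))) = ⊤)
    (L : ℕ) (hL : ∀ i, (S i).card ≤ L)
    (h : ∀ ε : ℝ, 0 < ε → ∃ D : ℕ, ∃ f : ∀ i, G i → ℝ, ∀ i,
      (∀ γ, 0 ≤ f i γ) ∧ (∑' γ, f i γ ^ 2 = 1) ∧
      (∀ s ∈ S i, ∑' γ, (f i γ - f i (γ * s)) ^ 2 ≤ ε ^ 2) ∧
      Function.support (f i) ⊆ wordBall ((S i : Set (G i))) D) :
    ∀ ε : ℝ, 0 < ε → ∃ M : ℝ, 0 < M ∧ ∃ g : ∀ i, G i → ℝ, ∀ i,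
      (∀ γ, 0 ≤ g i γ) ∧ (∑' γ, g i γ ^ 2 = 1) ∧
      (∀ s ∈ S i, ∑' γ, (g i γ - g i (γ * s)) ^ 2 ≤ ε ^ 2) ∧
      Summable (g i) ∧ (∑' γ, g i γ ≤ M) :=
  stmt_6_general G S L hL h
end

section
/- Let G be a group generated by a finite subset S, and assume G is amenable, i.e. for every nonempty finite T ⊆ G and δ > 0 there exists a nonempty finite F ⊆ G with #(F \ F·g) ≤ δ·#F for all g ∈ T. Let ε > 0 and D ∈ ℕ. Then the following are equivalent: (1) there exists f : G → [0,∞) with Σ_{γ∈G} f(γ)² = 1, Σ_{γ∈G} (f(γ) − f(γs))² ≤ ε² for every s ∈ S, and supp(f) ⊆ B(1_G, D); (2) there exists a map ξ assigning to each x ∈ G a function ξ_x : G → [0,∞) with Σ_{γ∈G} ξ_x(γ)² = 1, such that Σ_{γ∈G} (ξ_x(γ) − ξ_y(γ))² ≤ ε² whenever x⁻¹y ∈ S ∪ S⁻¹ ∪ {1_G}, and supp(ξ_x) ⊆ x·B(1_G, D) for every x ∈ G. -/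
/-!
The translates `ξ x γ = f (γ⁻¹ * x)` of a Reiter function form a Higson–Roe function, because
counting measure on `G` is invariant under `γ ↦ γ⁻¹ * x`.

Conversely, pull each `ξ x` back to `θ x γ = ξ x (x / γ)`, a unit vector supported in the ball
`B(1_G, D)`, and average over a Følner set `F`: the root mean square
`f γ = (|F|⁻¹ ∑_{x ∈ F} θ x γ ²)^{1/2}` is again a unit vector supported in the ball. Its right
translate `f (γ * s)` is the root mean square of the same kind of family over `F * s`, and
`θ (x * s) (γ * s) = ξ (x * s) (x / γ)` is `ε`-close to `θ x γ` in `ℓ²`; so `f` and its translate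
differ by at most `ε + √(2δ)` when `F` and `F * s` share all but `2δ|F|` elements. These averages
lie in a compact set of functions on the finite ball, and a cluster point as `δ → 0` satisfies
the bound with `ε` itself.
-/

open Finset Filter Function Topology

section WordBall

variable {G : Type*} [Group G] {S : Set G} {D : ℕ}

lemma inv_mem_wordBall {g : G} (hg : g ∈ wordBall S D) : g⁻¹ ∈ wordBall S D := by
  obtain ⟨l, hl, hS, rfl⟩ := hg
  refine ⟨(l.map (·⁻¹)).reverse, by simpa using hl, ?_, (List.prod_inv_reverse l).symm⟩
  simp only [List.mem_reverse, List.mem_map]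
  rintro _ ⟨x, hx, rfl⟩
  simpa [or_comm] using hS x hx

lemma finite_wordBall (hS : S.Finite) (D : ℕ) : (wordBall S D).Finite := by
  have : Finite ↥(S ∪ S⁻¹) := (hS.union hS.inv).to_subtype
  refine ((List.finite_length_le ↥(S ∪ S⁻¹) D).image fun l => (l.map (↑)).prod).subset ?_
  rintro _ ⟨l, hl, hS, rfl⟩
  lift l to List ↥(S ∪ S⁻¹) using hS
  exact ⟨l, by simpa using hl, rfl⟩

end WordBall

section SquareSums

variable {ι : Type*}

lemma sq_sqrt_sub_sqrt_le {x y : ℝ} (hx : 0 ≤ x) (hy : 0 ≤ y) : (√x - √y) ^ 2 ≤ |x - y| := by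
  rcases le_total x y with h | h
  · rw [abs_of_nonpos (by linarith)]
    nlinarith [Real.sq_sqrt hx, Real.sq_sqrt hy, Real.sqrt_nonneg x, Real.sqrt_le_sqrt h]
  · rw [abs_of_nonneg (by linarith)]
    nlinarith [Real.sq_sqrt hx, Real.sq_sqrt hy, Real.sqrt_nonneg y, Real.sqrt_le_sqrt h]

private lemma norm_toLp_eq (s : Finset ι) (a : ι → ℝ) :
    ‖(WithLp.toLp 2 fun i : s => a i : EuclideanSpace ℝ s)‖ = √(∑ i ∈ s, a i ^ 2) := by
  simp [EuclideanSpace.norm_eq, sq_abs, sum_attach s fun i => a i ^ 2]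

private lemma dist_toLp_eq (s : Finset ι) (a b : ι → ℝ) :
    dist (WithLp.toLp 2 fun i : s => a i : EuclideanSpace ℝ s) (WithLp.toLp 2 fun i => b i) =
      √(∑ i ∈ s, (a i - b i) ^ 2) := by
  simp [EuclideanSpace.dist_eq, Real.dist_eq, sq_abs, sum_attach s fun i => (a i - b i) ^ 2]

lemma sqrt_sum_sq_sub_le (s : Finset ι) (a b c : ι → ℝ) :
    √(∑ i ∈ s, (a i - c i) ^ 2) ≤ √(∑ i ∈ s, (a i - b i) ^ 2) + √(∑ i ∈ s, (b i - c i) ^ 2) := by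
  simpa only [dist_toLp_eq] using
    dist_triangle (WithLp.toLp 2 fun i : s => a i : EuclideanSpace ℝ s)
      (WithLp.toLp 2 fun i => b i) (WithLp.toLp 2 fun i => c i)

lemma sq_sqrt_sum_sq_sub_sqrt_sum_sq_le (s : Finset ι) (a b : ι → ℝ) :
    (√(∑ i ∈ s, a i ^ 2) - √(∑ i ∈ s, b i ^ 2)) ^ 2 ≤ ∑ i ∈ s, (a i - b i) ^ 2 := by
  have h := abs_norm_sub_norm_le (WithLp.toLp 2 fun i : s => a i : EuclideanSpace ℝ s)
    (WithLp.toLp 2 fun i => b i)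
  rw [← dist_eq_norm, dist_toLp_eq, norm_toLp_eq, norm_toLp_eq] at h
  calc _ ≤ √(∑ i ∈ s, (a i - b i) ^ 2) ^ 2 := sq_le_sq' (abs_le.mp h).1 (abs_le.mp h).2
    _ = _ := Real.sq_sqrt (sum_nonneg fun _ _ => sq_nonneg _)

end SquareSums

section RootMeanSquare

variable {ι α : Type*}

noncomputable def rootMeanSquare (F : Finset ι) (θ : ι → α → ℝ) (a : α) : ℝ :=
  √((∑ x ∈ F, θ x a ^ 2) / #F)

lemma rootMeanSquare_nonneg (F : Finset ι) (θ : ι → α → ℝ) (a : α) :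
    0 ≤ rootMeanSquare F θ a :=
  Real.sqrt_nonneg _

lemma rootMeanSquare_sq (F : Finset ι) (θ : ι → α → ℝ) (a : α) :
    rootMeanSquare F θ a ^ 2 = (∑ x ∈ F, θ x a ^ 2) / #F :=
  Real.sq_sqrt (by positivity)

lemma rootMeanSquare_eq_zero {F : Finset ι} {θ : ι → α → ℝ} {a : α} (h : ∀ x ∈ F, θ x a = 0) :
    rootMeanSquare F θ a = 0 := by
  rw [rootMeanSquare, sum_eq_zero fun x hx => by simp [h x hx]]
  simp

lemma sum_rootMeanSquare_sq {F : Finset ι} (hF : F.Nonempty) {θ : ι → α → ℝ} {W : Finset α}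
    (h : ∀ x ∈ F, ∑ a ∈ W, θ x a ^ 2 = 1) : ∑ a ∈ W, rootMeanSquare F θ a ^ 2 = 1 := by
  simp_rw [rootMeanSquare_sq, ← sum_div]
  rw [sum_comm, sum_congr rfl h, sum_const, nsmul_one, div_self (by simp [hF.ne_empty])]

lemma sum_sq_rootMeanSquare_sub_le (F : Finset ι) (θ θ' : ι → α → ℝ) (W : Finset α) :
    ∑ a ∈ W, (rootMeanSquare F θ a - rootMeanSquare F θ' a) ^ 2 ≤
      (∑ x ∈ F, ∑ a ∈ W, (θ x a - θ' x a) ^ 2) / #F := by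
  rw [sum_comm, sum_div]
  refine sum_le_sum fun a _ => ?_
  simp only [rootMeanSquare, Real.sqrt_div' _ (Nat.cast_nonneg #F), ← sub_div, div_pow,
    Real.sq_sqrt (Nat.cast_nonneg #F)]
  exact div_le_div_of_nonneg_right (sq_sqrt_sum_sq_sub_sqrt_sum_sq_le F _ _) (Nat.cast_nonneg _)

lemma sum_sq_rootMeanSquare_sub_le_card_sdiff [DecidableEq ι] {P Q : Finset ι} (hPQ : #P = #Q)
    {θ : ι → α → ℝ} {W : Finset α} (hθ : ∀ x, ∑ a ∈ W, θ x a ^ 2 ≤ 1) :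
    ∑ a ∈ W, (rootMeanSquare P θ a - rootMeanSquare Q θ a) ^ 2 ≤ (#(P \ Q) + #(Q \ P)) / #Q := by
  have pointwise (a : α) : (rootMeanSquare P θ a - rootMeanSquare Q θ a) ^ 2 ≤
      (∑ x ∈ P \ Q, θ x a ^ 2 + ∑ x ∈ Q \ P, θ x a ^ 2) / #Q := by
    refine (sq_sqrt_sub_sqrt_le (by positivity) (by positivity)).trans ?_
    rw [hPQ, ← sub_div, abs_div, Nat.abs_cast, ← sum_sdiff_sub_sum_sdiff]
    gcongr
    have := sum_nonneg fun x (_ : x ∈ P \ Q) => sq_nonneg (θ x a)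
    have := sum_nonneg fun x (_ : x ∈ Q \ P) => sq_nonneg (θ x a)
    rw [abs_le]
    constructor <;> linarith
  calc _ ≤ ∑ a ∈ W, (∑ x ∈ P \ Q, θ x a ^ 2 + ∑ x ∈ Q \ P, θ x a ^ 2) / #Q :=
        sum_le_sum fun a _ => pointwise a
    _ = (∑ x ∈ P \ Q, ∑ a ∈ W, θ x a ^ 2 + ∑ x ∈ Q \ P, ∑ a ∈ W, θ x a ^ 2) / #Q := by
        rw [← sum_div, sum_add_distrib, sum_comm, sum_comm (s := W)]
    _ ≤ _ := by
        gcongr <;> exact (sum_le_sum fun x _ => hθ x).trans_eq (by simp)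

end RootMeanSquare

section FolnerAveraging

variable {G : Type*} [Group G] [DecidableEq G]

lemma rootMeanSquare_image_mul_right (F : Finset G) (θ : G → G → ℝ) (s γ : G) :
    rootMeanSquare (F.image (· * s)) θ (γ * s) =
      rootMeanSquare F (fun x γ => θ (x * s) (γ * s)) γ := by
  simp only [rootMeanSquare, sum_image fun x _ y _ h => mul_right_cancel h,
    card_image_of_injective F (mul_left_injective s)]

lemma card_image_mul_right_sdiff (F : Finset G) (s : G) :
    #(F.image (· * s) \ F) = #(F \ F.image (· * s⁻¹)) := by
  rw [eq_comm, ← card_image_of_injective _ (mul_left_injective s),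
    image_sdiff _ _ (mul_left_injective s), image_image]
  simp only [comp_def, inv_mul_cancel_right, image_id']

lemma sqrt_sum_sq_rootMeanSquare_sub_le {θ : G → G → ℝ} {F W : Finset G} {s : G} {ε δ : ℝ}
    (hF : F.Nonempty) (hε : 0 ≤ ε)
    (hθ : ∀ x, ∑ γ ∈ W, (θ x γ - θ (x * s) (γ * s)) ^ 2 ≤ ε ^ 2)
    (hθ1 : ∀ x (V : Finset G), ∑ γ ∈ V, θ x γ ^ 2 ≤ 1)
    (hFs : #(F \ F.image (· * s)) ≤ δ * #F) (hFs' : #(F \ F.image (· * s⁻¹)) ≤ δ * #F) :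
    √(∑ γ ∈ W, (rootMeanSquare F θ γ - rootMeanSquare F θ (γ * s)) ^ 2) ≤ ε + √(2 * δ) := by
  set θs : G → G → ℝ := fun x γ => θ (x * s) (γ * s)
  have close_to_shifted_family :
      √(∑ γ ∈ W, (rootMeanSquare F θ γ - rootMeanSquare F θs γ) ^ 2) ≤ ε := by
    rw [Real.sqrt_le_left hε]
    calc _ ≤ (∑ x ∈ F, ∑ γ ∈ W, (θ x γ - θs x γ) ^ 2) / #F := sum_sq_rootMeanSquare_sub_le F θ θs W
      _ ≤ (∑ x ∈ F, ε ^ 2) / #F := by gcongr with x; exact hθ x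
      _ = ε ^ 2 := by rw [sum_const, nsmul_eq_mul]; field_simp
  have close_to_translate :
      √(∑ γ ∈ W, (rootMeanSquare F θs γ - rootMeanSquare F θ (γ * s)) ^ 2) ≤ √(2 * δ) := by
    apply Real.sqrt_le_sqrt
    calc ∑ γ ∈ W, (rootMeanSquare F θs γ - rootMeanSquare F θ (γ * s)) ^ 2
        = ∑ γ ∈ W.image (· * s),
            (rootMeanSquare (F.image (· * s)) θ γ - rootMeanSquare F θ γ) ^ 2 := by
          rw [sum_image fun x _ y _ h => mul_right_cancel h]
          simp only [rootMeanSquare_image_mul_right, θs]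
      _ ≤ (#(F.image (· * s) \ F) + #(F \ F.image (· * s))) / #F :=
          sum_sq_rootMeanSquare_sub_le_card_sdiff
            (card_image_of_injective F (mul_left_injective s)) fun x => hθ1 x _
      _ ≤ (δ * #F + δ * #F) / #F := by rw [card_image_mul_right_sdiff]; gcongr
      _ = 2 * δ := by field_simp; ring
  exact (sqrt_sum_sq_sub_le W _ (rootMeanSquare F θs) _).trans
    (add_le_add close_to_shifted_family close_to_translate)

end FolnerAveraging

lemma IsCompact.exists_forall_le_of_tendsto {X ι : Type*} [TopologicalSpace X] [T2Space X]
    {K : Set X} (hK : IsCompact K) {d : ι → X → ℝ} (hd : ∀ i, Continuous (d i)) {b : ℕ → ℝ}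
    {c : ℝ} (hb : Antitone b) (hbc : Tendsto b atTop (𝓝 c))
    (h : ∀ n, ∃ x ∈ K, ∀ i, d i x ≤ b n) : ∃ x ∈ K, ∀ i, d i x ≤ c := by
  have hlevel n : IsClosed (⋂ i, {x | d i x ≤ b n}) :=
    isClosed_iInter fun i => isClosed_le (hd i) continuous_const
  obtain ⟨x, hx⟩ := IsCompact.nonempty_iInter_of_sequence_nonempty_isCompact_isClosed
    (fun n => K ∩ ⋂ i, {x | d i x ≤ b n})
    (fun n => Set.inter_subset_inter_right _ <|
      Set.iInter_mono fun i x hx => hx.trans (hb n.le_succ))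
    (fun n => let ⟨x, hxK, hx⟩ := h n; ⟨x, hxK, Set.mem_iInter.2 hx⟩)
    (hK.inter_right (hlevel 0)) fun n => hK.isClosed.inter (hlevel n)
  simp only [Set.mem_iInter, Set.mem_inter_iff, Set.mem_ofPred_eq] at hx
  exact ⟨x, (hx 0).1, fun i => ge_of_tendsto' hbc fun n => (hx n).2 i⟩

lemma isCompact_setOf_sum_sq_eq_one {α : Type*} (B : Finset α) :
    IsCompact {f : α → ℝ | (∀ a, 0 ≤ f a) ∧ (∀ a ∉ B, f a = 0) ∧ ∑ a ∈ B, f a ^ 2 = 1} := by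
  refine (isCompact_univ_pi fun _ => isCompact_Icc (a := (0 : ℝ)) (b := 1)).of_isClosed_subset
    ?_ ?_
  · simp only [Set.ofPred_and, Set.ofPred_forall]
    exact (isClosed_iInter fun a => isClosed_le continuous_const (continuous_apply a)).inter
      ((isClosed_iInter fun a => isClosed_iInter fun _ =>
        isClosed_eq (continuous_apply a) continuous_const).inter
      (isClosed_eq (continuous_finsetSum _ fun a _ => (continuous_apply a).pow 2)
        continuous_const))
  · rintro f ⟨h0, hB, h1⟩ a -
    refine ⟨h0 a, ?_⟩
    by_cases ha : a ∈ B
    · rw [← pow_le_one_iff_of_nonneg (h0 a) two_ne_zero, ← h1]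
      exact single_le_sum (fun a _ => sq_nonneg (f a)) ha
    · simp [hB a ha]

section HigsonRoe

variable {G : Type*} [Group G]

def IsReiterFunction (S : Finset G) (ε : ℝ) (D : ℕ) (f : G → ℝ) : Prop :=
  (∀ γ, 0 ≤ f γ) ∧ (∑' γ, f γ ^ 2 = 1) ∧
    (∀ s ∈ S, ∑' γ, (f γ - f (γ * s)) ^ 2 ≤ ε ^ 2) ∧ support f ⊆ wordBall (S : Set G) D

def IsHigsonRoeFunction (S : Finset G) (ε : ℝ) (D : ℕ) (ξ : G → G → ℝ) : Prop :=
  (∀ x γ, 0 ≤ ξ x γ) ∧ (∀ x, ∑' γ, ξ x γ ^ 2 = 1) ∧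
    (∀ x y : G, x⁻¹ * y ∈ (S : Set G) ∪ (S : Set G)⁻¹ ∪ {1} →
      ∑' γ, (ξ x γ - ξ y γ) ^ 2 ≤ ε ^ 2) ∧
    (∀ x : G, support (ξ x) ⊆ (x * ·) '' wordBall (S : Set G) D)

variable {S : Finset G} {ε : ℝ} {D : ℕ}

lemma tsum_inv_mul {M : Type*} [AddCommMonoid M] [TopologicalSpace M] (g : G → M) (x : G) :
    ∑' γ, g (γ⁻¹ * x) = ∑' γ, g γ :=
  ((Equiv.inv G).trans (Equiv.mulRight x)).tsum_eq g

lemma tsum_sq_sub_mul_inv (f : G → ℝ) (g : G) :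
    ∑' γ, (f γ - f (γ * g⁻¹)) ^ 2 = ∑' γ, (f γ - f (γ * g)) ^ 2 := by
  rw [← (Equiv.mulRight g).tsum_eq]
  congr with γ
  rw [Equiv.coe_mulRight, mul_inv_cancel_right]
  ring

lemma IsReiterFunction.isHigsonRoeFunction {f : G → ℝ} (hf : IsReiterFunction S ε D f) :
    IsHigsonRoeFunction S ε D fun x γ => f (γ⁻¹ * x) := by
  obtain ⟨hf0, hf1, hfS, hfD⟩ := hf
  refine ⟨fun x γ => hf0 _, fun x => (tsum_inv_mul (f · ^ 2) x).trans hf1, fun x y hxy => ?_,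
    fun x γ hγ => ⟨(γ⁻¹ * x)⁻¹, inv_mem_wordBall (hfD hγ), by group⟩⟩
  have translate : ∑' γ, (f (γ⁻¹ * x) - f (γ⁻¹ * y)) ^ 2 =
      ∑' γ, (f γ - f (γ * (x⁻¹ * y))) ^ 2 := by
    rw [← tsum_inv_mul (fun γ => (f γ - f (γ * (x⁻¹ * y))) ^ 2) x]
    simp only [mul_assoc, mul_inv_cancel_left]
  rw [translate]
  rcases hxy with (hs | hs) | hs
  · exact hfS _ hs
  · simpa only [tsum_sq_sub_mul_inv, inv_inv] using hfS _ hs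
  · rw [Set.mem_singleton_iff.mp hs]
    simpa using sq_nonneg ε

lemma summable_sq_sub {ι : Type*} {a b : ι → ℝ} (ha : Summable fun i => a i ^ 2)
    (hb : Summable fun i => b i ^ 2) : Summable fun i => (a i - b i) ^ 2 :=
  ((ha.add hb).mul_left 2).of_nonneg_of_le (fun _ => sq_nonneg _) fun i => by
    nlinarith [sq_nonneg (a i + b i)]

lemma sum_div_left_le_tsum {g : G → ℝ} (hg : Summable g) (hg0 : ∀ γ, 0 ≤ g γ) (x : G)
    (V : Finset G) : ∑ γ ∈ V, g (x / γ) ≤ ∑' γ, g γ := by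
  rw [← (Equiv.divLeft x).tsum_eq]
  exact Summable.sum_le_tsum V (fun γ _ => hg0 _) ((Equiv.divLeft x).summable_iff.mpr hg)

noncomputable def wordBallFinset (S : Finset G) (D : ℕ) : Finset G :=
  (finite_wordBall S.finite_toSet D).toFinset

lemma mem_wordBallFinset {g : G} : g ∈ wordBallFinset S D ↔ g ∈ wordBall (S : Set G) D :=
  Set.Finite.mem_toFinset _

namespace IsHigsonRoeFunction

variable {ξ : G → G → ℝ}

lemma summable_sq (hξ : IsHigsonRoeFunction S ε D ξ) (x : G) : Summable fun γ => ξ x γ ^ 2 := by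
  by_contra h
  simpa [tsum_eq_zero_of_not_summable h] using hξ.2.1 x

lemma mem_wordBall_of_ne_zero (hξ : IsHigsonRoeFunction S ε D ξ) {x γ : G}
    (h : ξ x (x / γ) ≠ 0) : γ ∈ wordBall (S : Set G) D := by
  obtain ⟨b, hb, hbx⟩ := hξ.2.2.2 x h
  obtain rfl : b = γ⁻¹ := by simpa [div_eq_mul_inv] using hbx
  simpa using inv_mem_wordBall hb

lemma sum_sq_div_le_one (hξ : IsHigsonRoeFunction S ε D ξ) (x : G) (V : Finset G) :
    ∑ γ ∈ V, ξ x (x / γ) ^ 2 ≤ 1 :=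
  (sum_div_left_le_tsum (hξ.summable_sq x) (fun _ => sq_nonneg _) x V).trans_eq (hξ.2.1 x)

lemma sum_sq_div_eq_one (hξ : IsHigsonRoeFunction S ε D ξ) (x : G) :
    ∑ γ ∈ wordBallFinset S D, ξ x (x / γ) ^ 2 = 1 := by
  rw [← hξ.2.1 x, ← (Equiv.divLeft x).tsum_eq, tsum_eq_sum (s := wordBallFinset S D)]
  · simp only [Equiv.divLeft_apply]
  intro γ hγ
  by_contra h
  exact hγ (mem_wordBallFinset.mpr (hξ.mem_wordBall_of_ne_zero (by simpa using h)))

lemma sum_sq_sub_div_le (hξ : IsHigsonRoeFunction S ε D ξ) {s : G} (hs : s ∈ S) (x : G)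
    (V : Finset G) : ∑ γ ∈ V, (ξ x (x / γ) - ξ (x * s) (x * s / (γ * s))) ^ 2 ≤ ε ^ 2 := by
  simp only [mul_div_mul_right_eq_div]
  exact (sum_div_left_le_tsum (summable_sq_sub (hξ.summable_sq x) (hξ.summable_sq _))
    (fun _ => sq_nonneg _) x V).trans (hξ.2.2.1 x (x * s) (by simp [hs]))

end IsHigsonRoeFunction

end HigsonRoe

lemma tsum_sq_sub_mul_eq_sum {G : Type*} [Group G] [DecidableEq G] {f : G → ℝ} {B : Finset G}
    (hf : ∀ γ ∉ B, f γ = 0) (s : G) :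
    ∑' γ, (f γ - f (γ * s)) ^ 2 = ∑ γ ∈ B ∪ B.image (· * s⁻¹), (f γ - f (γ * s)) ^ 2 := by
  refine tsum_eq_sum fun γ hγ => ?_
  simp only [mem_union, mem_image, not_or, not_exists, not_and] at hγ
  rw [hf γ hγ.1, hf (γ * s) fun h => hγ.2 _ h (mul_inv_cancel_right γ s)]
  simp

theorem IsHigsonRoeFunction.exists_isReiterFunction {G : Type*} [Group G] [DecidableEq G]
    {S : Finset G} {ε : ℝ} {D : ℕ} {ξ : G → G → ℝ}
    (hamen : ∀ T : Finset G, T.Nonempty → ∀ δ : ℝ, 0 < δ →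
      ∃ F : Finset G, F.Nonempty ∧
        ∀ g ∈ T, ((F \ F.image (· * g)).card : ℝ) ≤ δ * F.card)
    (hε : 0 ≤ ε) (hξ : IsHigsonRoeFunction S ε D ξ) : ∃ f, IsReiterFunction S ε D f := by
  set B := wordBallFinset S D
  let defect (s : S) (f : G → ℝ) : ℝ :=
    ∑ γ ∈ B ∪ B.image (· * (s : G)⁻¹), (f γ - f (γ * s)) ^ 2
  let bound (n : ℕ) : ℝ := (ε + √(2 * (1 / ((n : ℝ) + 1)))) ^ 2
  have approx (n : ℕ) : ∃ f ∈ {f : G → ℝ | (∀ γ, 0 ≤ f γ) ∧ (∀ γ ∉ B, f γ = 0) ∧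
      ∑ γ ∈ B, f γ ^ 2 = 1}, ∀ s, defect s f ≤ bound n := by
    -- `1` is inserted only to make the set of translations nonempty
    obtain ⟨F, hF, hFol⟩ := hamen (insert 1 (S ∪ S.image (·⁻¹))) (insert_nonempty _ _)
      (1 / ((n : ℝ) + 1)) (by positivity)
    refine ⟨rootMeanSquare F (fun x γ => ξ x (x / γ)), ⟨rootMeanSquare_nonneg F _,
      fun γ hγ => rootMeanSquare_eq_zero fun x _ => by_contra fun h =>
        hγ (mem_wordBallFinset.mpr (hξ.mem_wordBall_of_ne_zero h)),
      sum_rootMeanSquare_sq hF fun x _ => hξ.sum_sq_div_eq_one x⟩, fun ⟨s, hs⟩ => ?_⟩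
    rw [← Real.sqrt_le_left (by positivity)]
    exact sqrt_sum_sq_rootMeanSquare_sub_le hF hε (hξ.sum_sq_sub_div_le hs · _)
      hξ.sum_sq_div_le_one (hFol s (by simp [hs])) (hFol s⁻¹ (by simp [hs]))
  have bound_antitone : Antitone bound := fun m n hmn => by
    dsimp only [bound]
    gcongr
  have bound_tendsto : Tendsto bound atTop (𝓝 (ε ^ 2)) := by
    simpa [bound] using
      (((tendsto_one_div_add_atTop_nhds_zero_nat.const_mul 2).sqrt).const_add ε).pow 2
  obtain ⟨f, ⟨hf0, hfB, hf1⟩, hfS⟩ :=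
    (isCompact_setOf_sum_sq_eq_one B).exists_forall_le_of_tendsto (d := defect)
      (fun s => by fun_prop) bound_antitone bound_tendsto approx
  refine ⟨f, hf0, ?_, fun s hs => ?_, fun γ hγ => ?_⟩
  · rwa [tsum_eq_sum fun γ hγ => by simp [hfB γ hγ]]
  · rw [tsum_sq_sub_mul_eq_sum hfB]
    exact hfS ⟨s, hs⟩
  · by_contra h
    exact hγ (hfB γ (mt mem_wordBallFinset.mp h))

theorem stmt_11_general {G : Type*} [Group G] [DecidableEq G] (S : Finset G)
    (hamen : ∀ T : Finset G, T.Nonempty → ∀ δ : ℝ, 0 < δ →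
      ∃ F : Finset G, F.Nonempty ∧
        ∀ g ∈ T, ((F \ F.image (· * g)).card : ℝ) ≤ δ * F.card)
    (ε : ℝ) (hε : 0 < ε) (D : ℕ) :
    (∃ f : G → ℝ, (∀ γ, 0 ≤ f γ) ∧ (∑' γ, f γ ^ 2 = 1) ∧
      (∀ s ∈ S, ∑' γ, (f γ - f (γ * s)) ^ 2 ≤ ε ^ 2) ∧
      Function.support f ⊆ wordBall (S : Set G) D)
    ↔
    (∃ ξ : G → G → ℝ, (∀ x γ, 0 ≤ ξ x γ) ∧ (∀ x, ∑' γ, ξ x γ ^ 2 = 1) ∧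
      (∀ x y : G, x⁻¹ * y ∈ (S : Set G) ∪ (S : Set G)⁻¹ ∪ {1} →
        ∑' γ, (ξ x γ - ξ y γ) ^ 2 ≤ ε ^ 2) ∧
      (∀ x : G, Function.support (ξ x) ⊆ (x * ·) '' wordBall (S : Set G) D)) :=
  ⟨fun ⟨_, hf⟩ => ⟨_, IsReiterFunction.isHigsonRoeFunction hf⟩,
    fun ⟨_, hξ⟩ => IsHigsonRoeFunction.exists_isReiterFunction hamen hε.le hξ⟩

theorem stmt_11 {G : Type*} [Group G] [DecidableEq G] (S : Finset G)
    (hgen : Subgroup.closure (S : Set G) = ⊤)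
    (hamen : ∀ T : Finset G, T.Nonempty → ∀ δ : ℝ, 0 < δ →
      ∃ F : Finset G, F.Nonempty ∧
        ∀ g ∈ T, ((F \ F.image (· * g)).card : ℝ) ≤ δ * F.card)
    (ε : ℝ) (hε : 0 < ε) (D : ℕ) :
    (∃ f : G → ℝ, (∀ γ, 0 ≤ f γ) ∧ (∑' γ, f γ ^ 2 = 1) ∧
      (∀ s ∈ S, ∑' γ, (f γ - f (γ * s)) ^ 2 ≤ ε ^ 2) ∧
      Function.support f ⊆ wordBall (S : Set G) D)
    ↔
    (∃ ξ : G → G → ℝ, (∀ x γ, 0 ≤ ξ x γ) ∧ (∀ x, ∑' γ, ξ x γ ^ 2 = 1) ∧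
      (∀ x y : G, x⁻¹ * y ∈ (S : Set G) ∪ (S : Set G)⁻¹ ∪ {1} →
        ∑' γ, (ξ x γ - ξ y γ) ^ 2 ≤ ε ^ 2) ∧
      (∀ x : G, Function.support (ξ x) ⊆ (x * ·) '' wordBall (S : Set G) D)) :=
  stmt_11_general S hamen ε hε D
end

section
/- Let I be an index set and, for each i ∈ I, let G_i be a group generated by a finite subset S_i, and assume each G_i is amenable, i.e. for every nonempty finite T ⊆ G_i and δ > 0 there exists a nonempty finite F ⊆ G_i with #(F \ F·g) ≤ δ·#F for all g ∈ T. Then the following are equivalent: (1) for every ε > 0 there exist M > 0 and functions f_i : G_i → [0,∞) with Σ_{γ∈G_i} f_i(γ)² = 1, Σ_{γ∈G_i} (f_i(γ) − f_i(γs))² ≤ ε² for every s ∈ S_i, and Σ_{γ∈G_i} f_i(γ) ≤ M; (2) for every ε > 0 there exist M' > 0 and functions f_i : G_i → [0,∞) with Σ_{γ∈G_i} f_i(γ)² = 1, Σ_{γ∈G_i} (f_i(γ) − f_i(γs))² ≤ ε² for every s ∈ S_i, Σ_{γ∈G_i} f_i(γ) < ∞, and such that the convolution operator α ↦ α ∗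 f_i on ℓ²(G_i;ℂ) has operator norm at most √M'. -/
open scoped ENNReal

open Finset in
/-- Cauchy–Schwarz for tsums of nonnegative reals. -/
lemma aux_tsum_cs {ι : Type*} (a b : ι → ℝ) (ha0 : ∀ x, 0 ≤ a x) (hb0 : ∀ x, 0 ≤ b x)
    (ha : Summable fun x => a x ^ 2) (hb : Summable fun x => b x ^ 2) :
    ∑' x, a x * b x ≤ Real.sqrt (∑' x, a x ^ 2) * Real.sqrt (∑' x, b x ^ 2) := by
  refine tsum_le_of_sum_le' (by positivity) fun s => ?_
  have h1 : (∑ x ∈ s, a x * b x) ^ 2 ≤ (∑ x ∈ s, a x ^ 2) * ∑ x ∈ s, b x ^ 2 :=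
    Finset.sum_mul_sq_le_sq_mul_sq s a b
  have h2 : ∑ x ∈ s, a x ^ 2 ≤ ∑' x, a x ^ 2 := Summable.sum_le_tsum s (fun _ _ => sq_nonneg _) ha
  have h3 : ∑ x ∈ s, b x ^ 2 ≤ ∑' x, b x ^ 2 := Summable.sum_le_tsum s (fun _ _ => sq_nonneg _) hb
  have hs0 : 0 ≤ ∑ x ∈ s, a x * b x :=
    Finset.sum_nonneg fun x _ => mul_nonneg (ha0 x) (hb0 x)
  calc ∑ x ∈ s, a x * b x = Real.sqrt ((∑ x ∈ s, a x * b x) ^ 2) := (Real.sqrt_sq hs0).symm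
    _ ≤ Real.sqrt ((∑' x, a x ^ 2) * ∑' x, b x ^ 2) :=
        Real.sqrt_le_sqrt (h1.trans (mul_le_mul h2 h3
          (Finset.sum_nonneg fun _ _ => sq_nonneg _) (tsum_nonneg fun _ => sq_nonneg _)))
    _ = _ := Real.sqrt_mul (tsum_nonneg fun _ => sq_nonneg _) _

lemma aux_rpow_two (x : ℝ) : x ^ ((2 : ℝ≥0∞).toReal) = x ^ 2 := by
  rw [show (2 : ℝ≥0∞).toReal = ((2 : ℕ) : ℝ) by simp, Real.rpow_natCast]

lemma aux_toReal_pos : 0 < (2 : ℝ≥0∞).toReal := by simp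

/-- The ℓ² norm squared of an element of `lp _ 2` is the tsum of squared norms. -/
lemma aux_lp_norm_sq {ι : Type*} (α : lp (fun _ : ι => ℂ) 2) :
    ‖α‖ ^ 2 = ∑' x, ‖α x‖ ^ 2 := by
  have := lp.norm_rpow_eq_tsum (E := fun _ : ι => ℂ) aux_toReal_pos α
  simpa [aux_rpow_two] using this

lemma aux_lp_sq_summable {ι : Type*} (α : lp (fun _ : ι => ℂ) 2) :
    Summable fun x => ‖α x‖ ^ 2 := by
  have := (memℓp_gen_iff (E := fun _ : ι => ℂ) aux_toReal_pos).mp (lp.memℓp α)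
  simpa [aux_rpow_two] using this

section translate
variable {G : Type*} [Group G] {g : G → ℝ}

lemma aux_summable_translate (hg : Summable g) (z : G) :
    Summable fun x => g (x⁻¹ * z) :=
  ((Equiv.inv G).trans (Equiv.mulRight z)).summable_iff.mpr hg

lemma aux_tsum_translate (z : G) : ∑' x, g (x⁻¹ * z) = ∑' x, g x :=
  ((Equiv.inv G).trans (Equiv.mulRight z)).tsum_eq g

end translate

set_option maxHeartbeats 1000000 in
theorem stmt_12 {I : Type*} (G : I → Type*) [∀ i, Group (G i)]
    [∀ i, DecidableEq (G i)] (S : ∀ i, Finset (G i))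
    (hgen : ∀ i, Subgroup.closure ((S i : Set (G i))) = ⊤)
    (hamen : ∀ i, ∀ T : Finset (G i), T.Nonempty → ∀ δ : ℝ, 0 < δ →
      ∃ F : Finset (G i), F.Nonempty ∧
        ∀ g ∈ T, ((F \ F.image (· * g)).card : ℝ) ≤ δ * F.card) :
    (∀ ε : ℝ, 0 < ε → ∃ M : ℝ, 0 < M ∧ ∃ f : ∀ i, G i → ℝ, ∀ i,
      (∀ γ, 0 ≤ f i γ) ∧ (∑' γ, f i γ ^ 2 = 1) ∧
      (∀ s ∈ S i, ∑' γ, (f i γ - f i (γ * s)) ^ 2 ≤ ε ^ 2) ∧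
      Summable (f i) ∧ (∑' γ, f i γ ≤ M))
    ↔
    (∀ ε : ℝ, 0 < ε → ∃ M' : ℝ, 0 < M' ∧ ∃ f : ∀ i, G i → ℝ, ∀ i,
      (∀ γ, 0 ≤ f i γ) ∧ (∑' γ, f i γ ^ 2 = 1) ∧
      (∀ s ∈ S i, ∑' γ, (f i γ - f i (γ * s)) ^ 2 ≤ ε ^ 2) ∧
      Summable (f i) ∧
      (∀ α : lp (fun _ : G i => ℂ) 2,
        ∑' z, ‖∑' x, α x * (f i (x⁻¹ * z) : ℂ)‖ ^ 2 ≤ M' * ‖α‖ ^ 2)) := by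
  constructor
  · -- (1) → (2) : Young's inequality ‖α ∗ f‖₂ ≤ ‖f‖₁ ‖α‖₂
    rintro h1 ε hε
    obtain ⟨M, hM, f, hf⟩ := h1 ε hε
    refine ⟨M ^ 2, by positivity, f, fun i => ?_⟩
    obtain ⟨hpos, hsq, hgrad, hsum, hle⟩ := hf i
    refine ⟨hpos, hsq, hgrad, hsum, fun α => ?_⟩
    set g : G i → ℝ := f i with hg
    set L : ℝ := ∑' γ, g γ with hL
    have hL0 : 0 ≤ L := tsum_nonneg hpos
    have hα2 : Summable fun x => ‖α x‖ ^ 2 := aux_lp_sq_summable α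
    -- summability facts for each z
    have hnab : ∀ z, Summable fun x => ‖α x‖ * g (x⁻¹ * z) := by
      intro z
      refine Summable.of_nonneg_of_le (fun x => mul_nonneg (norm_nonneg _) (hpos _)) ?_
        ((aux_summable_translate hsum z).mul_left ‖α‖)
      intro x
      exact mul_le_mul_of_nonneg_right (lp.norm_apply_le_norm two_ne_zero α x) (hpos _)
    have hb : ∀ z, Summable fun x => ‖α x‖ ^ 2 * g (x⁻¹ * z) := by
      intro z
      refine Summable.of_nonneg_of_le (fun x => mul_nonneg (sq_nonneg _) (hpos _)) ?_
        ((aux_summable_translate hsum z).mul_left (‖α‖ ^ 2))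
      intro x
      exact mul_le_mul_of_nonneg_right
        (pow_le_pow_left₀ (norm_nonneg _) (lp.norm_apply_le_norm two_ne_zero α x) 2) (hpos _)
    have hnorm_eq : ∀ z x, ‖α x * (g (x⁻¹ * z) : ℂ)‖ = ‖α x‖ * g (x⁻¹ * z) := by
      intro z x
      rw [norm_mul, Complex.norm_real, Real.norm_of_nonneg (hpos _)]
    -- pointwise Cauchy–Schwarz bound
    have key : ∀ z, ‖∑' x, α x * (g (x⁻¹ * z) : ℂ)‖ ^ 2
        ≤ L * ∑' x, ‖α x‖ ^ 2 * g (x⁻¹ * z) := by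
      intro z
      have h1 : ‖∑' x, α x * (g (x⁻¹ * z) : ℂ)‖ ≤ ∑' x, ‖α x‖ * g (x⁻¹ * z) := by
        have := norm_tsum_le_tsum_norm (f := fun x => α x * (g (x⁻¹ * z) : ℂ))
          (by simpa only [hnorm_eq z] using hnab z)
        simpa only [hnorm_eq z] using this
      have hcs : ∑' x, ‖α x‖ * g (x⁻¹ * z)
          ≤ Real.sqrt L * Real.sqrt (∑' x, ‖α x‖ ^ 2 * g (x⁻¹ * z)) := by
        have := aux_tsum_cs (fun x => Real.sqrt (g (x⁻¹ * z)))
          (fun x => ‖α x‖ * Real.sqrt (g (x⁻¹ * z)))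
          (fun x => Real.sqrt_nonneg _)
          (fun x => mul_nonneg (norm_nonneg _) (Real.sqrt_nonneg _))
          (by simpa [Real.sq_sqrt (hpos _)] using aux_summable_translate hsum z)
          (by simpa [mul_pow, Real.sq_sqrt (hpos _)] using hb z)
        calc ∑' x, ‖α x‖ * g (x⁻¹ * z)
            = ∑' x, Real.sqrt (g (x⁻¹ * z)) * (‖α x‖ * Real.sqrt (g (x⁻¹ * z))) := by
              congr 1; funext x
              rw [show Real.sqrt (g (x⁻¹ * z)) * (‖α x‖ * Real.sqrt (g (x⁻¹ * z)))
                = ‖α x‖ * (Real.sqrt (g (x⁻¹ * z)) * Real.sqrt (g (x⁻¹ * z))) by ring,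
                Real.mul_self_sqrt (hpos _)]
          _ ≤ Real.sqrt (∑' x, Real.sqrt (g (x⁻¹ * z)) ^ 2)
              * Real.sqrt (∑' x, (‖α x‖ * Real.sqrt (g (x⁻¹ * z))) ^ 2) := this
          _ = Real.sqrt L * Real.sqrt (∑' x, ‖α x‖ ^ 2 * g (x⁻¹ * z)) := by
              rw [show (∑' x, Real.sqrt (g (x⁻¹ * z)) ^ 2) = L by
                  simp only [Real.sq_sqrt (hpos _)]; rw [aux_tsum_translate],
                show (∑' x, (‖α x‖ * Real.sqrt (g (x⁻¹ * z))) ^ 2)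
                  = ∑' x, ‖α x‖ ^ 2 * g (x⁻¹ * z) by
                  simp only [mul_pow, Real.sq_sqrt (hpos _)]]
      have h2 : ‖∑' x, α x * (g (x⁻¹ * z) : ℂ)‖
          ≤ Real.sqrt L * Real.sqrt (∑' x, ‖α x‖ ^ 2 * g (x⁻¹ * z)) := h1.trans hcs
      calc ‖∑' x, α x * (g (x⁻¹ * z) : ℂ)‖ ^ 2
          ≤ (Real.sqrt L * Real.sqrt (∑' x, ‖α x‖ ^ 2 * g (x⁻¹ * z))) ^ 2 :=
            pow_le_pow_left₀ (norm_nonneg _) h2 2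
        _ = L * ∑' x, ‖α x‖ ^ 2 * g (x⁻¹ * z) := by
            rw [mul_pow, Real.sq_sqrt hL0,
              Real.sq_sqrt (tsum_nonneg fun x => mul_nonneg (sq_nonneg _) (hpos _))]
    -- sum over finite sets of z
    refine tsum_le_of_sum_le' (by positivity) fun A => ?_
    have hswap : ∑ z ∈ A, ∑' x, ‖α x‖ ^ 2 * g (x⁻¹ * z)
        = ∑' x, ∑ z ∈ A, ‖α x‖ ^ 2 * g (x⁻¹ * z) :=
      (Summable.tsum_finsetSum fun z _ => hb z).symm
    have hxz : ∀ x : G i, ∑ z ∈ A, g (x⁻¹ * z) ≤ L := by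
      intro x
      have hinj : ∀ y ∈ A, ∀ w ∈ A, x⁻¹ * y = x⁻¹ * w → y = w := by
        intro y _ w _ h; exact mul_left_cancel h
      calc ∑ z ∈ A, g (x⁻¹ * z) = ∑ y ∈ A.image (fun z => x⁻¹ * z), g y :=
            (Finset.sum_image hinj).symm
        _ ≤ L := Summable.sum_le_tsum _ (fun _ _ => hpos _) hsum
    have hA : ∑ z ∈ A, ∑' x, ‖α x‖ ^ 2 * g (x⁻¹ * z) ≤ L * ‖α‖ ^ 2 := by
      rw [hswap]
      have hle2 : ∀ x : G i, ∑ z ∈ A, ‖α x‖ ^ 2 * g (x⁻¹ * z) ≤ ‖α x‖ ^ 2 * L := by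
        intro x
        rw [← Finset.mul_sum]
        exact mul_le_mul_of_nonneg_left (hxz x) (sq_nonneg _)
      calc ∑' x, ∑ z ∈ A, ‖α x‖ ^ 2 * g (x⁻¹ * z) ≤ ∑' x, ‖α x‖ ^ 2 * L := by
            exact Summable.tsum_le_tsum hle2 (summable_sum fun z _ => hb z) (hα2.mul_right L)
        _ = L * ‖α‖ ^ 2 := by rw [tsum_mul_right, aux_lp_norm_sq α]; ring
    calc ∑ z ∈ A, ‖∑' x, α x * (g (x⁻¹ * z) : ℂ)‖ ^ 2
        ≤ ∑ z ∈ A, L * ∑' x, ‖α x‖ ^ 2 * g (x⁻¹ * z) :=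
          Finset.sum_le_sum fun z _ => key z
      _ = L * ∑ z ∈ A, ∑' x, ‖α x‖ ^ 2 * g (x⁻¹ * z) := by rw [Finset.mul_sum]
      _ ≤ L * (L * ‖α‖ ^ 2) := mul_le_mul_of_nonneg_left hA hL0
      _ = L * L * ‖α‖ ^ 2 := by ring
      _ ≤ M * M * ‖α‖ ^ 2 :=
          mul_le_mul_of_nonneg_right (mul_le_mul hle hle hL0 hM.le) (sq_nonneg _)
      _ = M ^ 2 * ‖α‖ ^ 2 := by ring
  · -- (2) → (1) : Følner sets give ‖f‖₁ ≤ ‖λ(f)‖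
    rintro h2 ε hε
    obtain ⟨M', hM', f, hf⟩ := h2 ε hε
    refine ⟨Real.sqrt M', Real.sqrt_pos.mpr hM', f, fun i => ?_⟩
    obtain ⟨hpos, hsq, hgrad, hsum, hop⟩ := hf i
    refine ⟨hpos, hsq, hgrad, hsum, ?_⟩
    set g : G i → ℝ := f i with hg
    by_contra hcon
    push_neg at hcon
    obtain ⟨c, hc1, hc2⟩ := exists_between hcon
    have hc0 : 0 < c := (Real.sqrt_pos.mpr hM').trans hc1
    have hcsq : M' < c ^ 2 := by
      calc M' = Real.sqrt M' ^ 2 := (Real.sq_sqrt hM'.le).symm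
        _ < c ^ 2 := by
          apply pow_lt_pow_left₀ hc1 (Real.sqrt_nonneg _)
          norm_num
    -- find a finite set T capturing more than c of the ℓ¹ mass
    obtain ⟨T, hT⟩ := (hsum.hasSum.eventually (eventually_gt_nhds hc2)).exists
    have hTne : T.Nonempty := by
      rcases T.eq_empty_or_nonempty with h | h
      · rw [h] at hT; simp at hT; linarith
      · exact h
    have hTcard : (0 : ℝ) < T.card := by
      exact_mod_cast Finset.card_pos.mpr hTne
    set δ : ℝ := (c ^ 2 - M') / (c ^ 2 * T.card) with hδdef
    have hδ : 0 < δ := div_pos (by linarith) (by positivity)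
    obtain ⟨F, hFne, hFol⟩ := hamen i T hTne δ hδ
    have hFcard : (0 : ℝ) < F.card := by
      exact_mod_cast Finset.card_pos.mpr hFne
    -- the good set F'
    set Bad : Finset (G i) := T.biUnion (fun γ => F \ F.image (· * γ)) with hBad
    set F' : Finset (G i) := F \ Bad with hF'
    have hBadcard : (Bad.card : ℝ) ≤ (c ^ 2 - M') / c ^ 2 * F.card := by
      have h1 : (Bad.card : ℝ) ≤ ∑ γ ∈ T, ((F \ F.image (· * γ)).card : ℝ) := by
        exact_mod_cast Finset.card_biUnion_le
      have h2 : ∑ γ ∈ T, ((F \ F.image (· * γ)).card : ℝ) ≤ ∑ γ ∈ T, δ * F.card :=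
        Finset.sum_le_sum fun γ hγ => hFol γ hγ
      have h3 : ∑ γ ∈ T, δ * (F.card : ℝ) = T.card * (δ * F.card) := by
        rw [Finset.sum_const, nsmul_eq_mul]
      have h4 : (T.card : ℝ) * (δ * F.card) = (c ^ 2 - M') / c ^ 2 * F.card := by
        rw [hδdef]; field_simp
      linarith
    have hF'card : (M' / c ^ 2) * F.card ≤ (F'.card : ℝ) := by
      have h1 : (F.card : ℝ) ≤ F'.card + Bad.card := by
        have := Finset.card_sdiff_add_card F Bad
        have h2 : F.card ≤ (F \ Bad).card + Bad.card := by
          rw [this]; exact Finset.card_le_card Finset.subset_union_left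
        exact_mod_cast h2
      have h5 : (M' / c ^ 2) * F.card + (c ^ 2 - M') / c ^ 2 * F.card = F.card := by
        field_simp
        ring
      linarith
    -- the test function: indicator of F
    set a : G i → ℂ := fun x => if x ∈ F then 1 else 0 with ha
    have hamem : Memℓp a 2 := by
      apply memℓp_gen
      apply summable_of_ne_finset_zero (s := F)
      intro x hx
      simp [ha, hx, Real.zero_rpow aux_toReal_pos.ne']
    set α : lp (fun _ : G i => ℂ) 2 := ⟨a, hamem⟩ with hα
    have hαx : ∀ x, α x = a x := fun x => rfl
    have hαnorm : ‖α‖ ^ 2 = (F.card : ℝ) := by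
      calc ‖α‖ ^ 2 = ∑' x, ‖α x‖ ^ 2 := aux_lp_norm_sq α
        _ = ∑ x ∈ F, ‖α x‖ ^ 2 := tsum_eq_sum fun x hx => by simp [hαx, ha, hx]
        _ = ∑ x ∈ F, 1 := Finset.sum_congr rfl fun x hx => by simp [hαx, ha, hx]
        _ = F.card := by simp
    -- compute the convolution at z
    have hconv : ∀ z : G i, (∑' x, α x * (g (x⁻¹ * z) : ℂ))
        = ((∑ x ∈ F, g (x⁻¹ * z) : ℝ) : ℂ) := by
      intro z
      calc (∑' x, α x * (g (x⁻¹ * z) : ℂ))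
          = ∑ x ∈ F, α x * (g (x⁻¹ * z) : ℂ) :=
            tsum_eq_sum fun x hx => by simp [hαx, ha, hx]
        _ = ∑ x ∈ F, ((g (x⁻¹ * z) : ℝ) : ℂ) :=
            Finset.sum_congr rfl fun x hx => by simp [hαx, ha, hx]
        _ = ((∑ x ∈ F, g (x⁻¹ * z) : ℝ) : ℂ) := by push_cast; ring
    -- lower bound on F'
    have hlow : ∀ z ∈ F', c < ∑ x ∈ F, g (x⁻¹ * z) := by
      intro z hz
      rw [hF', Finset.mem_sdiff] at hz
      obtain ⟨hzF, hzB⟩ := hz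
      have himg : ∀ γ ∈ T, z * γ⁻¹ ∈ F := by
        intro γ hγ
        have : z ∈ F.image (· * γ) := by
          by_contra hno
          exact hzB (Finset.mem_biUnion.mpr ⟨γ, hγ, Finset.mem_sdiff.mpr ⟨hzF, hno⟩⟩)
        obtain ⟨w, hw, hwz⟩ := Finset.mem_image.mp this
        rw [← hwz]
        simpa using hw
      have hinj : ∀ γ ∈ T, ∀ γ' ∈ T, z * γ⁻¹ = z * γ'⁻¹ → γ = γ' := by
        intro γ _ γ' _ h
        have := mul_left_cancel h
        exact inv_injective this
      have hsub : T.image (fun γ => z * γ⁻¹) ⊆ F := by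
        intro x hx
        obtain ⟨γ, hγ, rfl⟩ := Finset.mem_image.mp hx
        exact himg γ hγ
      calc c < ∑ γ ∈ T, g γ := hT
        _ = ∑ x ∈ T.image (fun γ => z * γ⁻¹), g (x⁻¹ * z) := by
            rw [Finset.sum_image hinj]
            exact Finset.sum_congr rfl fun γ _ => by
              congr 1; simp [mul_inv_rev, mul_assoc]
        _ ≤ ∑ x ∈ F, g (x⁻¹ * z) :=
            Finset.sum_le_sum_of_subset_of_nonneg hsub fun x _ _ => hpos _
    -- summability of the convolution squares
    have hnormconv : ∀ z, ‖∑' x, α x * (g (x⁻¹ * z) : ℂ)‖ ^ 2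
        = (∑ x ∈ F, g (x⁻¹ * z)) ^ 2 := by
      intro z
      rw [hconv z, Complex.norm_real, Real.norm_eq_abs, sq_abs]
    have hg2 : Summable fun γ => g γ ^ 2 := by
      by_contra h
      rw [tsum_eq_zero_of_not_summable h] at hsq
      norm_num at hsq
    have hφ : Summable fun z : G i => (∑ x ∈ F, g (x⁻¹ * z)) ^ 2 := by
      have hterm : ∀ x : G i, Summable fun z => g (x⁻¹ * z) ^ 2 := fun x =>
        (hg2.comp_injective (mul_right_injective x⁻¹) : _)
      have hmaj : Summable fun z : G i => (F.card : ℝ) * ∑ x ∈ F, g (x⁻¹ * z) ^ 2 :=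
        (summable_sum (fun x (_ : x ∈ F) => hterm x)).mul_left (F.card : ℝ)
      refine Summable.of_nonneg_of_le (fun z => sq_nonneg _) (fun z => ?_) hmaj
      have h := Finset.sum_mul_sq_le_sq_mul_sq F (fun x => g (x⁻¹ * z)) 1
      simp only [Pi.one_apply, mul_one, one_pow, Finset.sum_const, nsmul_eq_mul] at h
      linarith
    have hconvsum : Summable fun z => ‖∑' x, α x * (g (x⁻¹ * z) : ℂ)‖ ^ 2 :=
      (summable_congr fun z => hnormconv z).mpr hφ
    -- combine
    have hup := hop α
    have hF'pos : (0 : ℝ) < F'.card := by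
      calc (0:ℝ) < M' / c ^ 2 * F.card := by positivity
        _ ≤ F'.card := hF'card
    have hF'ne : F'.Nonempty := by
      rw [← Finset.card_pos]
      exact_mod_cast hF'pos
    have hbig : M' * (F.card : ℝ) < ∑' z, ‖∑' x, α x * (g (x⁻¹ * z) : ℂ)‖ ^ 2 := by
      have hstep1 : M' * (F.card : ℝ) ≤ (F'.card : ℝ) * c ^ 2 := by
        have := mul_le_mul_of_nonneg_right hF'card (sq_nonneg c)
        calc M' * (F.card : ℝ) = M' / c ^ 2 * F.card * c ^ 2 := by
              field_simp
          _ ≤ (F'.card : ℝ) * c ^ 2 := this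
      have hstep2 : (F'.card : ℝ) * c ^ 2 < ∑ z ∈ F', ‖∑' x, α x * (g (x⁻¹ * z) : ℂ)‖ ^ 2 := by
        rw [show (F'.card : ℝ) * c ^ 2 = ∑ _z ∈ F', c ^ 2 by
          rw [Finset.sum_const, nsmul_eq_mul]]
        refine Finset.sum_lt_sum_of_nonempty hF'ne fun z hz => ?_
        rw [hnormconv z]
        exact pow_lt_pow_left₀ (hlow z hz) hc0.le (by norm_num)
      have hstep3 : ∑ z ∈ F', ‖∑' x, α x * (g (x⁻¹ * z) : ℂ)‖ ^ 2
          ≤ ∑' z, ‖∑' x, α x * (g (x⁻¹ * z) : ℂ)‖ ^ 2 :=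
        Summable.sum_le_tsum F' (fun z _ => sq_nonneg _) hconvsum
      linarith
    rw [hαnorm] at hup
    linarith
end

section
/- Let I be an index set, L ∈ ℕ, and for each i ∈ I let G_i be a group generated by a finite subset S_i with #S_i ≤ L, equipped with the word metric. Then the following are equivalent: (1) the family {(G_i, S_i)}_{i∈I} is uniformly amenable: for every ε > 0 there exist D ∈ ℕ and functions f_i : G_i → [0,∞) with Σ_{γ∈G_i} f_i(γ)² = 1, Σ_{γ∈G_i} (f_i(γ) − f_i(γs))² ≤ ε² for every s ∈ S_i, and supp(f_i) ⊆ B(1_{G_i}, D); (2) for every R ∈ ℕ and ε > 0 there exist D' ∈ ℕ and nonempty finite subsets F_i ⊆ G_i (i ∈ I) such that #((F_i · B(1_{G_i}, R)) \ F_i) ≤ ε · #F_i and F_i ⊆ B(1_{G_i}, D'). -/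
/-!
(1) ⇒ (2): for `f` as in (1), `g = f²` is a probability density on `G` with `‖g - s·g‖₁ ≤ 2ε`
for `s ∈ S` (Cauchy–Schwarz, here in the form of a weighted AM–GM), hence, by the triangle
inequality, `‖g - w·g‖₁ ≤ 2Rε` on the ball `B(R)`, which has at most `(2L+1)^R` elements.
By the layer-cake formula the superlevel sets `F_t = {g > t}` satisfy `∫₀^∞ #F_t dt = ∑ g = 1`
and `∫₀^∞ #∂_R F_t dt ≤ ∑_{w ∈ B(R)} ‖g - w·g‖₁`, so for small `ε` some nonempty `F_t` is an
`R`-Følner set; it lies in `supp f ⊆ B(D)`.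

(2) ⇒ (1): the `ℓ²`-normalised indicator `f` of a `1`-Følner set `F` satisfies
`‖f - s·f‖₂² = (#(F \ F s⁻¹) + #(F \ F s)) / #F ≤ 2 #∂₁F / #F`.
-/

open scoped Pointwise

open Finset MeasureTheory
open scoped ENNReal

section
variable {G : Type*} [Group G]

lemma wordBall_zero (S : Set G) : wordBall S 0 = 1 := by
  ext g
  simp [wordBall, eq_comm]

lemma wordBall_succ_s15 (S : Set G) (R : ℕ) :
    wordBall S (R + 1) = (S ∪ S⁻¹ ∪ 1) * wordBall S R := by
  ext g
  constructor
  · rintro ⟨_ | ⟨x, l⟩, hlen, hl, rfl⟩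
    · exact ⟨1, by simp, 1, ⟨[], by simp⟩, by simp⟩
    · refine ⟨x, ?_, l.prod, ⟨l, ?_, fun y hy => hl y (by simp [hy]), rfl⟩, rfl⟩
      · rcases hl x (by simp) with h | h <;> simp [h]
      · simpa using hlen
  · rintro ⟨x, hx, _, ⟨l, hlen, hl, rfl⟩, rfl⟩
    rcases hx with (hx | hx) | rfl
    · exact ⟨x :: l, by simpa using hlen, by simp_all, rfl⟩
    · exact ⟨x :: l, by simpa using hlen, by simp_all, rfl⟩
    · exact ⟨l, by omega, hl, by simp⟩

lemma wordBall_eq_pow (S : Set G) (R : ℕ) : wordBall S R = (S ∪ S⁻¹ ∪ 1) ^ R := by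
  induction R with
  | zero => exact wordBall_zero S
  | succ R ih => rw [wordBall_succ_s15, ih, pow_succ']

lemma wordBall_coe_finset [DecidableEq G] (S : Finset G) (R : ℕ) :
    wordBall (S : Set G) R = ↑((S ∪ S⁻¹ ∪ 1) ^ R) := by
  simp only [wordBall_eq_pow, coe_pow, coe_union, coe_inv, coe_one]

lemma card_symm_one_pow_le [DecidableEq G] (S : Finset G) (R : ℕ) :
    #((S ∪ S⁻¹ ∪ 1) ^ R) ≤ (2 * #S + 1) ^ R := by
  refine card_pow_le.trans (Nat.pow_le_pow_left ?_ R)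
  calc #(S ∪ S⁻¹ ∪ 1) ≤ #(S ∪ S⁻¹) + #(1 : Finset G) := card_union_le _ _
    _ ≤ #S + #S⁻¹ + 1 := by gcongr; exacts [card_union_le _ _, card_one.le]
    _ = 2 * #S + 1 := by rw [card_inv]; ring

end

section
variable {G : Type*} [Group G] [DecidableEq G]

lemma card_filter_mul_notMem_le {F W : Finset G} {w : G} (hw : w ∈ W) :
    #{x ∈ F | x * w ∉ F} ≤ #((F * W) \ F) := by
  rw [← card_image_of_injective _ (mul_left_injective w)]
  refine card_le_card fun y hy => ?_
  obtain ⟨x, hx, rfl⟩ := mem_image.1 hy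
  rw [mem_filter] at hx
  exact mem_sdiff.2 ⟨mul_mem_mul hx.1 hw, hx.2⟩

lemma card_mul_sdiff_le_sum (F W : Finset G) :
    #((F * W) \ F) ≤ ∑ w ∈ W, #{x ∈ F | x * w ∉ F} := by
  have hcover : (F * W) \ F ⊆ W.biUnion fun w => {x ∈ F | x * w ∉ F}.image (· * w) := by
    intro y hy
    obtain ⟨hmul, hy⟩ := mem_sdiff.1 hy
    obtain ⟨x, hx, w, hw, rfl⟩ := mem_mul.1 hmul
    exact mem_biUnion.2 ⟨w, hw, mem_image.2 ⟨x, mem_filter.2 ⟨hx, hy⟩, rfl⟩⟩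
  exact (card_le_card hcover).trans <| card_biUnion_le.trans <| sum_le_sum fun w _ => card_image_le

end

section
variable {α β : Type*} (K : Finset α) {p : α → β → Prop} [∀ t, DecidablePred (p · t)]

lemma natCast_card_filter_eq_sum_indicator (t : β) :
    (#{x ∈ K | p x t} : ℝ≥0∞) = ∑ x ∈ K, {t | p x t}.indicator 1 t := by
  rw [card_filter]
  push_cast
  simp [Set.indicator_apply]

variable [MeasurableSpace β]

lemma measurable_natCast_card_filter (hp : ∀ x, MeasurableSet {t | p x t}) :
    Measurable fun t => (#{x ∈ K | p x t} : ℝ≥0∞) := by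
  simp_rw [natCast_card_filter_eq_sum_indicator]
  exact Finset.measurable_sum _ fun x _ => measurable_one.indicator (hp x)

lemma lintegral_natCast_card_filter (hp : ∀ x, MeasurableSet {t | p x t}) (μ : Measure β) :
    ∫⁻ t, (#{x ∈ K | p x t} : ℝ≥0∞) ∂μ = ∑ x ∈ K, μ {t | p x t} := by
  simp_rw [natCast_card_filter_eq_sum_indicator]
  rw [lintegral_finsetSum _ fun x _ => measurable_one.indicator (hp x)]
  simp [lintegral_indicator_one (hp _)]

end

section
variable {α : Type*} (K : Finset α)

lemma lintegral_card_superlevel {g : α → ℝ} (hg : ∀ x, 0 ≤ g x) :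
    ∫⁻ t in Set.Ioi 0, (#{x ∈ K | t < g x} : ℝ≥0∞) = ENNReal.ofReal (∑ x ∈ K, g x) := by
  rw [lintegral_natCast_card_filter K (fun x => measurableSet_Iio (a := g x)),
    ENNReal.ofReal_sum_of_nonneg fun x _ => hg x]
  refine sum_congr rfl fun x _ => ?_
  change volume.restrict (Set.Ioi 0) (Set.Iio (g x)) = _
  rw [Measure.restrict_apply measurableSet_Iio, Set.Iio_inter_Ioi, Real.volume_Ioo, sub_zero]

lemma lintegral_card_filter_Ico_le (a b : α → ℝ) :
    ∫⁻ t, (#{x ∈ K | a x ≤ t ∧ t < b x} : ℝ≥0∞) ≤ ENNReal.ofReal (∑ x ∈ K, |b x - a x|) := by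
  rw [lintegral_natCast_card_filter K (fun x => measurableSet_Ico (a := a x) (b := b x)),
    ENNReal.ofReal_sum_of_nonneg fun x _ => abs_nonneg _]
  gcongr with x
  exact Real.volume_Ico.trans_le (ENNReal.ofReal_le_ofReal (le_abs_self _))

end

section
variable {G : Type*} [Group G] [DecidableEq G] {K B : Finset G} {g : G → ℝ}

lemma card_mul_sdiff_superlevel_le (hK : ∀ x ∉ K, g x = 0) {t : ℝ} (ht : 0 ≤ t) :
    #(({x ∈ K | t < g x} * B) \ {x ∈ K | t < g x}) ≤
      ∑ w ∈ B, #{x ∈ K | g (x * w) ≤ t ∧ t < g x} := by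
  refine (card_mul_sdiff_le_sum _ B).trans (sum_le_sum fun w _ => card_le_card fun x hx => ?_)
  simp only [mem_filter, not_and, not_lt] at hx ⊢
  refine ⟨hx.1.1, ?_, hx.1.2⟩
  by_cases hxw : x * w ∈ K
  · exact hx.2 hxw
  · exact (hK _ hxw).trans_le ht

lemma exists_subset_card_mul_sdiff_le {ε : ℝ} (hg : ∀ x, 0 ≤ g x) (hK : ∀ x ∉ K, g x = 0)
    (hsmall : ∑ w ∈ B, ∑ x ∈ K, |g x - g (x * w)| < ε * ∑ x ∈ K, g x) :
    ∃ F ⊆ K, F.Nonempty ∧ (#((F * B) \ F) : ℝ) ≤ ε * #F := by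
  by_contra! hbad
  have hε : 0 ≤ ε := by
    have hlhs : 0 ≤ ∑ w ∈ B, ∑ x ∈ K, |g x - g (x * w)| := by positivity
    exact (pos_of_mul_pos_left (hlhs.trans_lt hsmall) (sum_nonneg fun x _ => hg x)).le
  have hlevel : ∀ t ∈ Set.Ioi (0 : ℝ), ENNReal.ofReal ε * #{x ∈ K | t < g x} ≤
      ∑ w ∈ B, (#{x ∈ K | g (x * w) ≤ t ∧ t < g x} : ℝ≥0∞) := by
    intro t ht
    set F : Finset G := {x ∈ K | t < g x}
    calc ENNReal.ofReal ε * #F ≤ (#((F * B) \ F) : ℝ≥0∞) := by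
          rcases F.eq_empty_or_nonempty with hF | hF
          · simp [hF]
          · rw [← ENNReal.ofReal_natCast, ← ENNReal.ofReal_natCast, ← ENNReal.ofReal_mul hε]
            exact ENNReal.ofReal_le_ofReal (hbad F (filter_subset _ _) hF).le
      _ ≤ _ := by exact_mod_cast card_mul_sdiff_superlevel_le hK (le_of_lt ht)
  have key : ENNReal.ofReal (ε * ∑ x ∈ K, g x) ≤
      ENNReal.ofReal (∑ w ∈ B, ∑ x ∈ K, |g x - g (x * w)|) := by
    calc ENNReal.ofReal (ε * ∑ x ∈ K, g x)
        = ∫⁻ t in Set.Ioi 0, ENNReal.ofReal ε * #{x ∈ K | t < g x} := by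
          rw [lintegral_const_mul' _ _ ENNReal.ofReal_ne_top, lintegral_card_superlevel K hg,
            ENNReal.ofReal_mul hε]
      _ ≤ ∫⁻ t in Set.Ioi 0, ∑ w ∈ B, (#{x ∈ K | g (x * w) ≤ t ∧ t < g x} : ℝ≥0∞) :=
          setLIntegral_mono' measurableSet_Ioi hlevel
      _ ≤ ∫⁻ t, ∑ w ∈ B, (#{x ∈ K | g (x * w) ≤ t ∧ t < g x} : ℝ≥0∞) :=
          setLIntegral_le_lintegral _ _
      _ ≤ _ := by
          rw [lintegral_finsetSum' _ fun w _ =>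
            (measurable_natCast_card_filter K fun x => measurableSet_Ico).aemeasurable,
            ENNReal.ofReal_sum_of_nonneg fun w _ => by positivity]
          exact sum_le_sum fun w _ => lintegral_card_filter_Ico_le K _ _
  rw [ENNReal.ofReal_le_ofReal_iff (by positivity)] at key
  linarith

end

lemma abs_sq_sub_sq_le {δ : ℝ} (hδ : 0 < δ) (a b : ℝ) :
    |a ^ 2 - b ^ 2| ≤ δ⁻¹ * (a - b) ^ 2 + δ / 2 * (a ^ 2 + b ^ 2) := by
  have hfactor : |a ^ 2 - b ^ 2| = |a - b| * |a + b| := by rw [← abs_mul]; ring_nf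
  have hamgm : δ * (|a - b| * |a + b|) ≤ (a - b) ^ 2 + δ ^ 2 / 2 * (a ^ 2 + b ^ 2) := by
    nlinarith [sq_nonneg (|a - b| - δ / 2 * |a + b|), sq_abs (a - b), sq_abs (a + b),
      sq_nonneg (a - b)]
  refine le_of_mul_le_mul_left ?_ hδ
  calc δ * |a ^ 2 - b ^ 2| ≤ (a - b) ^ 2 + δ ^ 2 / 2 * (a ^ 2 + b ^ 2) := hfactor ▸ hamgm
    _ = δ * (δ⁻¹ * (a - b) ^ 2 + δ / 2 * (a ^ 2 + b ^ 2)) := by field_simp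

section
variable {G : Type*} [Group G]

/-- `‖g - w·g‖₁` for the right translation `(w·g)(x) = g (x * w)`. -/
noncomputable def l1DistTranslate (g : G → ℝ) (w : G) : ℝ := ∑' x, |g x - g (x * w)|

lemma summable_abs_sub_mul_right {g : G → ℝ} (hg : Summable g) (w : G) :
    Summable fun x => |g x - g (x * w)| :=
  (hg.sub ((Equiv.mulRight w).summable_iff.2 hg)).abs

@[simp]
lemma l1DistTranslate_one (g : G → ℝ) : l1DistTranslate g 1 = 0 := by
  simp [l1DistTranslate]

lemma l1DistTranslate_inv (g : G → ℝ) (w : G) : l1DistTranslate g w⁻¹ = l1DistTranslate g w := by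
  rw [l1DistTranslate, ← (Equiv.mulRight w).tsum_eq]
  simp [l1DistTranslate, abs_sub_comm]

lemma l1DistTranslate_mul_le {g : G → ℝ} (hg : Summable g) (v w : G) :
    l1DistTranslate g (v * w) ≤ l1DistTranslate g v + l1DistTranslate g w := by
  have hshift : l1DistTranslate g w = ∑' x, |g (x * v) - g (x * (v * w))| := by
    rw [l1DistTranslate, ← (Equiv.mulRight v).tsum_eq]
    simp [mul_assoc]
  have hsummable : Summable fun x => |g (x * v) - g (x * (v * w))| := by
    simpa [Function.comp_def, mul_assoc] using
      (Equiv.mulRight v).summable_iff.2 (summable_abs_sub_mul_right hg w)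
  rw [hshift, l1DistTranslate, l1DistTranslate,
    ← (summable_abs_sub_mul_right hg v).tsum_add hsummable]
  exact (summable_abs_sub_mul_right hg _).tsum_le_tsum (fun x => abs_sub_le _ _ _)
    ((summable_abs_sub_mul_right hg v).add hsummable)

lemma summable_of_tsum_eq_one {α : Type*} {f : α → ℝ} (hf : ∑' x, f x = 1) : Summable f := by
  by_contra h
  rw [tsum_eq_zero_of_not_summable h] at hf
  exact zero_ne_one hf

lemma l1DistTranslate_sq_le {f : G → ℝ} (hf : ∑' x, f x ^ 2 = 1) {δ : ℝ} (hδ : 0 < δ) {s : G}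
    (hs : ∑' x, (f x - f (x * s)) ^ 2 ≤ δ ^ 2) :
    l1DistTranslate (fun x => f x ^ 2) s ≤ 2 * δ := by
  have hsq : Summable fun x => f x ^ 2 := summable_of_tsum_eq_one hf
  have hsq_s : Summable fun x => f (x * s) ^ 2 := (Equiv.mulRight s).summable_iff.2 hsq
  have hf_s : ∑' x, f (x * s) ^ 2 = 1 := ((Equiv.mulRight s).tsum_eq fun x => f x ^ 2).trans hf
  have hdiff : Summable fun x => (f x - f (x * s)) ^ 2 :=
    ((hsq.add hsq_s).mul_left 2).of_nonneg_of_le (fun x => sq_nonneg _)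
      fun x => by nlinarith [sq_nonneg (f x + f (x * s))]
  calc l1DistTranslate (fun x => f x ^ 2) s
      ≤ ∑' x, (δ⁻¹ * (f x - f (x * s)) ^ 2 + δ / 2 * (f x ^ 2 + f (x * s) ^ 2)) :=
        (summable_abs_sub_mul_right hsq s).tsum_le_tsum (fun x => abs_sq_sub_sq_le hδ _ _)
          ((hdiff.mul_left _).add ((hsq.add hsq_s).mul_left _))
    _ = δ⁻¹ * ∑' x, (f x - f (x * s)) ^ 2 + δ / 2 * (∑' x, f x ^ 2 + ∑' x, f (x * s) ^ 2) := by
        rw [(hdiff.mul_left _).tsum_add ((hsq.add hsq_s).mul_left _), tsum_mul_left, tsum_mul_left,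
          hsq.tsum_add hsq_s]
    _ ≤ δ⁻¹ * δ ^ 2 + δ / 2 * (1 + 1) := by rw [hf, hf_s]; gcongr
    _ = 2 * δ := by field_simp; ring

lemma l1DistTranslate_le_of_mem_wordBall {g : G → ℝ} (hg : Summable g) {S : Set G} {c : ℝ}
    (hc : 0 ≤ c) (hS : ∀ s ∈ S, l1DistTranslate g s ≤ c) {R : ℕ} {w : G}
    (hw : w ∈ wordBall S R) : l1DistTranslate g w ≤ R * c := by
  have hlist : ∀ l : List G, (∀ x ∈ l, x ∈ S ∨ x⁻¹ ∈ S) →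
      l1DistTranslate g l.prod ≤ l.length * c := by
    intro l hl
    induction l with
    | nil => simp
    | cons x l ih =>
      have hx : l1DistTranslate g x ≤ c := by
        rcases hl x (by simp) with hx | hx
        · exact hS x hx
        · simpa [l1DistTranslate_inv] using hS _ hx
      rw [List.prod_cons, List.length_cons]
      push_cast
      linarith [l1DistTranslate_mul_le hg x l.prod, ih (fun y hy => hl y (by simp [hy]))]
  obtain ⟨l, hlen, hl, rfl⟩ := hw
  exact (hlist l hl).trans (by gcongr)

end

section
variable {α : Type*} [DecidableEq α]

noncomputable def normalizedIndicator (F : Finset α) (x : α) : ℝ :=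
  if x ∈ F then (√(#F : ℝ))⁻¹ else 0

lemma normalizedIndicator_nonneg (F : Finset α) (x : α) : 0 ≤ normalizedIndicator F x := by
  unfold normalizedIndicator
  split_ifs <;> positivity

lemma support_normalizedIndicator_subset (F : Finset α) :
    Function.support (normalizedIndicator F) ⊆ F := by
  intro x hx
  by_contra h
  exact hx (if_neg h)

lemma tsum_normalizedIndicator_sq {F : Finset α} (hF : F.Nonempty) :
    ∑' x, normalizedIndicator F x ^ 2 = 1 := by
  rw [tsum_eq_sum (s := F) fun x hx => by simp [normalizedIndicator, hx]]
  have hcard : (0 : ℝ) < #F := by exact_mod_cast hF.card_pos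
  simp [normalizedIndicator, sum_ite_mem, inv_pow, Real.sq_sqrt hcard.le, hcard.ne']

lemma tsum_ite_mem (E : Finset α) : ∑' x, (if x ∈ E then (1 : ℝ) else 0) = #E := by
  rw [tsum_eq_sum (s := E) fun x hx => if_neg hx, sum_boole, filter_mem_eq_inter, inter_self]

end

section
variable {G : Type*} [Group G] [DecidableEq G]

lemma tsum_sq_sub_normalizedIndicator (F : Finset G) (s : G) :
    ∑' x, (normalizedIndicator F x - normalizedIndicator F (x * s)) ^ 2 =
      (#{x ∈ F | x * s ∉ F} + #{x ∈ F | x * s⁻¹ ∉ F}) / #F := by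
  have hpt : ∀ x, (normalizedIndicator F x - normalizedIndicator F (x * s)) ^ 2 =
      (#F : ℝ)⁻¹ * ((if x ∈ {x ∈ F | x * s ∉ F} then 1 else 0) +
        (if x * s ∈ {x ∈ F | x * s⁻¹ ∉ F} then 1 else 0)) := by
    intro x
    have hsq : (√(#F : ℝ))⁻¹ ^ 2 = (#F : ℝ)⁻¹ := by rw [inv_pow, Real.sq_sqrt (Nat.cast_nonneg _)]
    by_cases hx : x ∈ F <;> by_cases hxs : x * s ∈ F <;>
      simp [normalizedIndicator, hx, hxs, hsq]
  have hsummable : ∀ E : Finset G, Summable fun x => if x ∈ E then (1 : ℝ) else 0 :=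
    fun E => summable_of_ne_finset_zero fun x hx => if_neg hx
  have hsummable_shift : Summable fun x => if x * s ∈ {x ∈ F | x * s⁻¹ ∉ F} then (1 : ℝ) else 0 :=
    (hsummable _).comp_injective (mul_left_injective s)
  have hshift : ∑' x, (if x * s ∈ {x ∈ F | x * s⁻¹ ∉ F} then (1 : ℝ) else 0) =
      #{x ∈ F | x * s⁻¹ ∉ F} :=
    ((Equiv.mulRight s).tsum_eq fun x => if x ∈ {x ∈ F | x * s⁻¹ ∉ F} then (1 : ℝ) else 0).trans
      (tsum_ite_mem _)
  simp_rw [hpt]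
  rw [tsum_mul_left, (hsummable _).tsum_add hsummable_shift,
    tsum_ite_mem, hshift, inv_mul_eq_div]

lemma ncard_mul_wordBall_sdiff (F S : Finset G) (R : ℕ) :
    (((F : Set G) * wordBall (S : Set G) R) \ (F : Set G)).ncard =
      #((F * (S ∪ S⁻¹ ∪ 1) ^ R) \ F) := by
  rw [wordBall_coe_finset, ← coe_mul, ← coe_sdiff, Set.ncard_coe_finset]

lemma exists_folner_of_almost_invariant {S : Finset G} {R D : ℕ} {ε δ : ℝ} (hδ : 0 < δ)
    {f : G → ℝ} (hf : ∑' x, f x ^ 2 = 1) (hfS : ∀ s ∈ S, ∑' x, (f x - f (x * s)) ^ 2 ≤ δ ^ 2)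
    (hsupp : Function.support f ⊆ wordBall (S : Set G) D)
    (hε : #((S ∪ S⁻¹ ∪ 1) ^ R) * (2 * R) * δ < ε) :
    ∃ F : Finset G, F.Nonempty ∧
      ((((F : Set G) * wordBall (S : Set G) R) \ (F : Set G)).ncard : ℝ) ≤ ε * #F ∧
      (F : Set G) ⊆ wordBall (S : Set G) D := by
  set K := (S ∪ S⁻¹ ∪ 1) ^ D
  set B := (S ∪ S⁻¹ ∪ 1) ^ R
  have hsq : Summable fun x => f x ^ 2 := summable_of_tsum_eq_one hf
  have hK : ∀ x ∉ K, f x ^ 2 = 0 := by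
    intro x hx
    have hfx : f x = 0 := Function.notMem_support.1 fun h => hx (by
      have hxK := hsupp h
      rwa [wordBall_coe_finset, mem_coe] at hxK)
    simp [hfx]
  have hmass : ∑ x ∈ K, f x ^ 2 = 1 := (tsum_eq_sum hK).symm.trans hf
  have htranslate : ∀ w ∈ B, ∑ x ∈ K, |f x ^ 2 - f (x * w) ^ 2| ≤ R * (2 * δ) := by
    intro w hw
    refine ((summable_abs_sub_mul_right hsq w).sum_le_tsum K fun x _ => abs_nonneg _).trans
      (l1DistTranslate_le_of_mem_wordBall hsq (by positivity)
        (fun s hs => l1DistTranslate_sq_le hf hδ (hfS s hs)) ?_)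
    rwa [wordBall_coe_finset]
  have hsmall : ∑ w ∈ B, ∑ x ∈ K, |f x ^ 2 - f (x * w) ^ 2| < ε * ∑ x ∈ K, f x ^ 2 := by
    rw [hmass, mul_one]
    refine (sum_le_card_nsmul _ _ _ htranslate).trans_lt ?_
    rw [nsmul_eq_mul]
    linarith
  obtain ⟨F, hFK, hF, hbd⟩ := exists_subset_card_mul_sdiff_le (fun x => sq_nonneg (f x)) hK hsmall
  refine ⟨F, hF, by rwa [ncard_mul_wordBall_sdiff], ?_⟩
  rw [wordBall_coe_finset]
  exact_mod_cast hFK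

lemma tsum_sq_sub_normalizedIndicator_le {S F : Finset G} (hF : F.Nonempty) {ε : ℝ}
    (hfol : ((((F : Set G) * wordBall (S : Set G) 1) \ (F : Set G)).ncard : ℝ) ≤ ε ^ 2 / 2 * #F)
    {s : G} (hs : s ∈ S) :
    ∑' x, (normalizedIndicator F x - normalizedIndicator F (x * s)) ^ 2 ≤ ε ^ 2 := by
  rw [ncard_mul_wordBall_sdiff, pow_one] at hfol
  have hexit : ∀ u ∈ S ∪ S⁻¹ ∪ 1, (#{x ∈ F | x * u ∉ F} : ℝ) ≤ ε ^ 2 / 2 * #F :=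
    fun u hu => (Nat.cast_le.2 (card_filter_mul_notMem_le hu)).trans hfol
  have hcard : (0 : ℝ) < #F := by exact_mod_cast hF.card_pos
  rw [tsum_sq_sub_normalizedIndicator, div_le_iff₀ hcard]
  linarith [hexit s (by simp [hs]), hexit s⁻¹ (by simp [hs])]

end

theorem stmt_15_general {I : Type*} (G : I → Type*) [∀ i, Group (G i)]
    (S : ∀ i, Finset (G i))
    (L : ℕ) (hL : ∀ i, (S i).card ≤ L) :
    (∀ ε : ℝ, 0 < ε → ∃ D : ℕ, ∃ f : ∀ i, G i → ℝ, ∀ i,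
      (∀ γ, 0 ≤ f i γ) ∧ (∑' γ, f i γ ^ 2 = 1) ∧
      (∀ s ∈ S i, ∑' γ, (f i γ - f i (γ * s)) ^ 2 ≤ ε ^ 2) ∧
      Function.support (f i) ⊆ wordBall ((S i : Set (G i))) D)
    ↔
    (∀ R : ℕ, ∀ ε : ℝ, 0 < ε → ∃ D' : ℕ, ∃ F : ∀ i, Finset (G i), ∀ i,
      (F i).Nonempty ∧
      ((((F i : Set (G i)) * wordBall ((S i : Set (G i))) R) \ (F i : Set (G i))).ncard : ℝ)
        ≤ ε * (F i).card ∧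
      (F i : Set (G i)) ⊆ wordBall ((S i : Set (G i))) D') := by
  classical
  constructor
  · intro h R ε hε
    obtain ⟨δ, hδ, hδε⟩ := exists_pos_mul_lt hε ((2 * L + 1) ^ R * (2 * R) : ℝ)
    obtain ⟨D, f, hf⟩ := h δ hδ
    have hbound : ∀ i, #((S i ∪ (S i)⁻¹ ∪ 1) ^ R) * (2 * R) * δ < ε := by
      intro i
      have hcard : (#((S i ∪ (S i)⁻¹ ∪ 1) ^ R) : ℝ) ≤ (2 * L + 1) ^ R := by
        exact_mod_cast (card_symm_one_pow_le _ _).trans (Nat.pow_le_pow_left (by linarith [hL i]) R)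
      exact lt_of_le_of_lt (by gcongr) hδε
    choose F hF using fun i =>
      exists_folner_of_almost_invariant hδ (hf i).2.1 (hf i).2.2.1 (hf i).2.2.2 (hbound i)
    exact ⟨D, F, hF⟩
  · intro h ε hε
    obtain ⟨D', F, hF⟩ := h 1 (ε ^ 2 / 2) (by positivity)
    exact ⟨D', fun i => normalizedIndicator (F i), fun i =>
      ⟨normalizedIndicator_nonneg _, tsum_normalizedIndicator_sq (hF i).1,
        fun s hs => tsum_sq_sub_normalizedIndicator_le (hF i).1 (hF i).2.1 hs,
        (support_normalizedIndicator_subset _).trans (hF i).2.2⟩⟩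

theorem stmt_15 {I : Type*} (G : I → Type*) [∀ i, Group (G i)]
    (S : ∀ i, Finset (G i))
    (hgen : ∀ i, Subgroup.closure ((S i : Set (G i))) = ⊤)
    (L : ℕ) (hL : ∀ i, (S i).card ≤ L) :
    (∀ ε : ℝ, 0 < ε → ∃ D : ℕ, ∃ f : ∀ i, G i → ℝ, ∀ i,
      (∀ γ, 0 ≤ f i γ) ∧ (∑' γ, f i γ ^ 2 = 1) ∧
      (∀ s ∈ S i, ∑' γ, (f i γ - f i (γ * s)) ^ 2 ≤ ε ^ 2) ∧
      Function.support (f i) ⊆ wordBall ((S i : Set (G i))) D)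
    ↔
    (∀ R : ℕ, ∀ ε : ℝ, 0 < ε → ∃ D' : ℕ, ∃ F : ∀ i, Finset (G i), ∀ i,
      (F i).Nonempty ∧
      ((((F i : Set (G i)) * wordBall ((S i : Set (G i))) R) \ (F i : Set (G i))).ncard : ℝ)
        ≤ ε * (F i).card ∧
      (F i : Set (G i)) ⊆ wordBall ((S i : Set (G i))) D') :=
  stmt_15_general G S L hL
end
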